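/- arXiv:1006.0580 — 8 statements merged into one kernel-verified Lean document; each statement's English description precedes it below -/
import Mathlib

section
/- Let T, L > 0, S_M > 0, let v : [0,T] × [0,L] → ℝ be continuous with v(t,x) > 0 everywhere, let χ : [0,T] → ℝ be continuous with χ(t) ≥ 0 for all t, and let A ∈ C¹([0,T] × [0,L]) satisfy ∂ₜA(t,x) + v(t,x) ∂ₓA(t,x) = −χ(t) on (0,T) × (0,L). If A(0,x) ≤ S_M for all x ∈ [0,L] and A(t,0) ≤ S_M for all t ∈ [0,T], then A(t,x) ≤ S_M for all (t,x) ∈ [0,T] × [0,L]. -/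
/-!
Penalize: for `ε > 0` the function `A t x - ε x` attains its maximum on a closed rectangle
`[0, τ] × [0, ξ]`. Off the inflow boundary `{t = 0} ∪ {x = 0}`, the one-sided derivatives at the
maximum satisfy `∂ₜA ≥ 0` and `∂ₓA ≥ ε`, so `∂ₜA + v ∂ₓA ≥ v ε > 0`, contradicting
`∂ₜA + v ∂ₓA = -χ ≤ 0`. Hence `A ≤ S_M + ε x`, and `ε → 0` gives `A ≤ S_M`. Working on rectangles
with `τ < T` and `ξ < L` keeps the maximum inside the region where the equation holds; the sides
`t = T` and `x = L` then follow by continuity of `A`.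
-/

open Set Function

theorem IsMaxOn.nonneg_of_hasDerivWithinAt_Icc {f : ℝ → ℝ} {f' a b c : ℝ}
    (hmax : IsMaxOn f (Icc a b) c) (hac : a < c) (hcb : c ≤ b)
    (hd : HasDerivWithinAt f f' (Icc a b) c) : 0 ≤ f' := by
  have hdir : a - c ∈ posTangentConeAt (Icc a b) c :=
    sub_mem_posTangentConeAt_of_segment_subset <|
      (convex_Icc a b).segment_subset ⟨hac.le, hcb⟩ ⟨le_rfl, hac.le.trans hcb⟩
  have := hmax.localize.hasFDerivWithinAt_nonpos hd.hasFDerivWithinAt hdir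
  simp only [ContinuousLinearMap.toSpanSingleton_apply, smul_eq_mul] at this
  nlinarith

section Rectangle

variable {τ ξ M : ℝ} {v A At Ax : ℝ → ℝ → ℝ}

theorem le_add_mul_of_transport_subsolution
    (hA : ContinuousOn (uncurry A) (Icc 0 τ ×ˢ Icc 0 ξ))
    (hAt : ∀ t ∈ Ioc 0 τ, ∀ x ∈ Ioc 0 ξ, HasDerivWithinAt (A · x) (At t x) (Icc 0 τ) t)
    (hAx : ∀ t ∈ Ioc 0 τ, ∀ x ∈ Ioc 0 ξ, HasDerivWithinAt (A t ·) (Ax t x) (Icc 0 ξ) x)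
    (hv : ∀ t ∈ Ioc 0 τ, ∀ x ∈ Ioc 0 ξ, 0 < v t x)
    (hsub : ∀ t ∈ Ioc 0 τ, ∀ x ∈ Ioc 0 ξ, At t x + v t x * Ax t x ≤ 0)
    (hinit : ∀ x ∈ Icc 0 ξ, A 0 x ≤ M) (hbdry : ∀ t ∈ Icc 0 τ, A t 0 ≤ M)
    {ε : ℝ} (hε : 0 < ε) {t x : ℝ} (ht : t ∈ Icc 0 τ) (hx : x ∈ Icc 0 ξ) :
    A t x ≤ M + ε * x := by
  have hpen : ContinuousOn (fun p : ℝ × ℝ => A p.1 p.2 - ε * p.2) (Icc 0 τ ×ˢ Icc 0 ξ) :=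
    hA.sub (by fun_prop)
  obtain ⟨⟨t₀, x₀⟩, ⟨ht₀, hx₀⟩, hmax⟩ :=
    (isCompact_Icc.prod isCompact_Icc).exists_isMaxOn ⟨(t, x), ht, hx⟩ hpen
  suffices A t₀ x₀ - ε * x₀ ≤ M by
    have : A t x - ε * x ≤ A t₀ x₀ - ε * x₀ := hmax (mk_mem_prod ht hx)
    linarith
  by_contra! hgt
  have ht₀pos : 0 < t₀ := ht₀.1.lt_of_ne <| by
    rintro rfl
    nlinarith [hinit x₀ hx₀, hx₀.1]
  have hx₀pos : 0 < x₀ := hx₀.1.lt_of_ne <| by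
    rintro rfl
    linarith [hbdry t₀ ht₀]
  have hAt_nonneg : 0 ≤ At t₀ x₀ :=
    IsMaxOn.nonneg_of_hasDerivWithinAt_Icc (f := fun s => A s x₀ - ε * x₀)
      (fun s hs => hmax (mk_mem_prod hs hx₀)) ht₀pos ht₀.2
      ((hAt t₀ ⟨ht₀pos, ht₀.2⟩ x₀ ⟨hx₀pos, hx₀.2⟩).sub_const _)
  have hAx_ge : 0 ≤ Ax t₀ x₀ - ε :=
    IsMaxOn.nonneg_of_hasDerivWithinAt_Icc (f := fun y => A t₀ y - ε * y)
      (fun y hy => hmax (mk_mem_prod ht₀ hy)) hx₀pos hx₀.2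
      ((hAx t₀ ⟨ht₀pos, ht₀.2⟩ x₀ ⟨hx₀pos, hx₀.2⟩).sub
        (by simpa using (hasDerivWithinAt_id x₀ (Icc 0 ξ)).const_mul ε))
  have hv₀ := hv t₀ ⟨ht₀pos, ht₀.2⟩ x₀ ⟨hx₀pos, hx₀.2⟩
  have hsub₀ := hsub t₀ ⟨ht₀pos, ht₀.2⟩ x₀ ⟨hx₀pos, hx₀.2⟩
  nlinarith

theorem le_of_transport_subsolution
    (hA : ContinuousOn (uncurry A) (Icc 0 τ ×ˢ Icc 0 ξ))
    (hAt : ∀ t ∈ Ioc 0 τ, ∀ x ∈ Ioc 0 ξ, HasDerivWithinAt (A · x) (At t x) (Icc 0 τ) t)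
    (hAx : ∀ t ∈ Ioc 0 τ, ∀ x ∈ Ioc 0 ξ, HasDerivWithinAt (A t ·) (Ax t x) (Icc 0 ξ) x)
    (hv : ∀ t ∈ Ioc 0 τ, ∀ x ∈ Ioc 0 ξ, 0 < v t x)
    (hsub : ∀ t ∈ Ioc 0 τ, ∀ x ∈ Ioc 0 ξ, At t x + v t x * Ax t x ≤ 0)
    (hinit : ∀ x ∈ Icc 0 ξ, A 0 x ≤ M) (hbdry : ∀ t ∈ Icc 0 τ, A t 0 ≤ M)
    {t x : ℝ} (ht : t ∈ Icc 0 τ) (hx : x ∈ Icc 0 ξ) : A t x ≤ M := by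
  rcases hx.1.eq_or_lt with rfl | hxpos
  · exact hbdry t ht
  refine le_of_forall_pos_le_add fun ε hε => ?_
  have := le_add_mul_of_transport_subsolution hA hAt hAx hv hsub hinit hbdry
    (div_pos hε hxpos) ht hx
  rwa [div_mul_cancel₀ ε hxpos.ne'] at this

end Rectangle

theorem statement2_general
    (T L S_M : ℝ) (hT : 0 < T) (hL : 0 < L)
    (v : ℝ → ℝ → ℝ) (χ : ℝ → ℝ) (A At Ax : ℝ → ℝ → ℝ)
    (hvpos : ∀ t ∈ Icc (0:ℝ) T, ∀ x ∈ Icc (0:ℝ) L, 0 < v t x)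
    (hχnn : ∀ t ∈ Icc (0:ℝ) T, 0 ≤ χ t)
    (hAcont : ContinuousOn (fun p : ℝ × ℝ => A p.1 p.2) (Icc 0 T ×ˢ Icc 0 L))
    (hAt : ∀ t ∈ Icc (0:ℝ) T, ∀ x ∈ Icc (0:ℝ) L,
        HasDerivWithinAt (fun s => A s x) (At t x) (Icc 0 T) t)
    (hAx : ∀ t ∈ Icc (0:ℝ) T, ∀ x ∈ Icc (0:ℝ) L,
        HasDerivWithinAt (fun y => A t y) (Ax t x) (Icc 0 L) x)
    (heq : ∀ t ∈ Ioo (0:ℝ) T, ∀ x ∈ Ioo (0:ℝ) L,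
        At t x + v t x * Ax t x = - χ t)
    (hinit : ∀ x ∈ Icc (0:ℝ) L, A 0 x ≤ S_M)
    (hbdry : ∀ t ∈ Icc (0:ℝ) T, A t 0 ≤ S_M) :
    ∀ t ∈ Icc (0:ℝ) T, ∀ x ∈ Icc (0:ℝ) L, A t x ≤ S_M := by
  have hK : Icc 0 T ×ˢ Icc 0 L = closure (Ico (0:ℝ) T ×ˢ Ico (0:ℝ) L) := by
    rw [closure_prod_eq, closure_Ico hT.ne, closure_Ico hL.ne]
  have hsubK : Ico (0:ℝ) T ×ˢ Ico (0:ℝ) L ⊆ Icc 0 T ×ˢ Icc 0 L :=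
    prod_mono Ico_subset_Icc_self Ico_subset_Icc_self
  have hinner : ∀ p ∈ Ico (0:ℝ) T ×ˢ Ico (0:ℝ) L, A p.1 p.2 ≤ S_M := by
    rintro ⟨τ, ξ⟩ ⟨hτ, hξ⟩
    have hτT : Icc 0 τ ⊆ Icc 0 T := Icc_subset_Icc_right hτ.2.le
    have hξL : Icc 0 ξ ⊆ Icc 0 L := Icc_subset_Icc_right hξ.2.le
    have hτT' : Ioc 0 τ ⊆ Ioo 0 T := Ioc_subset_Ioo_right hτ.2
    have hξL' : Ioc 0 ξ ⊆ Ioo 0 L := Ioc_subset_Ioo_right hξ.2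
    refine le_of_transport_subsolution (v := v) (At := At) (Ax := Ax)
      (hAcont.mono (prod_mono hτT hξL))
      (fun t ht x hx => (hAt t (Ioo_subset_Icc_self (hτT' ht)) x
        (Ioo_subset_Icc_self (hξL' hx))).mono hτT)
      (fun t ht x hx => (hAx t (Ioo_subset_Icc_self (hτT' ht)) x
        (Ioo_subset_Icc_self (hξL' hx))).mono hξL)
      (fun t ht x hx => hvpos t (Ioo_subset_Icc_self (hτT' ht)) x
        (Ioo_subset_Icc_self (hξL' hx)))
      (fun t ht x hx => ?_) (fun x hx => hinit x (hξL hx)) (fun t ht => hbdry t (hτT ht))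
      (right_mem_Icc.2 hτ.1) (right_mem_Icc.2 hξ.1)
    rw [heq t (hτT' ht) x (hξL' hx), neg_nonpos]
    exact hχnn t (Ioo_subset_Icc_self (hτT' ht))
  intro t ht x hx
  have hp : (t, x) ∈ closure (Ico (0:ℝ) T ×ˢ Ico (0:ℝ) L) := by
    rw [closure_prod_eq, closure_Ico hT.ne, closure_Ico hL.ne]
    exact mk_mem_prod ht hx
  exact ContinuousWithinAt.closure_le (f := fun p : ℝ × ℝ => A p.1 p.2) hp
    ((hAcont _ (mk_mem_prod ht hx)).mono (prod_mono Ico_subset_Icc_self Ico_subset_Icc_self))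
    continuousWithinAt_const hinner

/-- Maximum principle for the transport equation
`∂ₜA + v ∂ₓA = −χ(t)` with `v > 0` continuous and `χ ≥ 0` continuous: if `A ∈ C¹` on the
rectangle satisfies the equation on `(0,T) × (0,L)` and `A ≤ S_M` on `{t = 0}` and on
`{x = 0}`, then `A ≤ S_M` on all of `[0,T] × [0,L]`.  Here `At`, `Ax` are the partial
derivatives of `A` (one-sided at the boundary), continuous on the closed rectangle. -/
theorem statement2
    (T L S_M : ℝ) (hT : 0 < T) (hL : 0 < L) (hSM : 0 < S_M)
    (v : ℝ → ℝ → ℝ) (χ : ℝ → ℝ) (A At Ax : ℝ → ℝ → ℝ)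
    (hvcont : ContinuousOn (fun p : ℝ × ℝ => v p.1 p.2) (Icc 0 T ×ˢ Icc 0 L))
    (hvpos : ∀ t ∈ Icc (0:ℝ) T, ∀ x ∈ Icc (0:ℝ) L, 0 < v t x)
    (hχcont : ContinuousOn χ (Icc 0 T))
    (hχnn : ∀ t ∈ Icc (0:ℝ) T, 0 ≤ χ t)
    (hAcont : ContinuousOn (fun p : ℝ × ℝ => A p.1 p.2) (Icc 0 T ×ˢ Icc 0 L))
    (hAtcont : ContinuousOn (fun p : ℝ × ℝ => At p.1 p.2) (Icc 0 T ×ˢ Icc 0 L))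
    (hAxcont : ContinuousOn (fun p : ℝ × ℝ => Ax p.1 p.2) (Icc 0 T ×ˢ Icc 0 L))
    (hAt : ∀ t ∈ Icc (0:ℝ) T, ∀ x ∈ Icc (0:ℝ) L,
        HasDerivWithinAt (fun s => A s x) (At t x) (Icc 0 T) t)
    (hAx : ∀ t ∈ Icc (0:ℝ) T, ∀ x ∈ Icc (0:ℝ) L,
        HasDerivWithinAt (fun y => A t y) (Ax t x) (Icc 0 L) x)
    (heq : ∀ t ∈ Ioo (0:ℝ) T, ∀ x ∈ Ioo (0:ℝ) L,
        At t x + v t x * Ax t x = - χ t)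
    (hinit : ∀ x ∈ Icc (0:ℝ) L, A 0 x ≤ S_M)
    (hbdry : ∀ t ∈ Icc (0:ℝ) T, A t 0 ≤ S_M) :
    ∀ t ∈ Icc (0:ℝ) T, ∀ x ∈ Icc (0:ℝ) L, A t x ≤ S_M :=
  statement2_general T L S_M hT hL v χ A At Ax hvpos hχnn hAcont hAt hAx heq hinit hbdry
end

section
/- Let T, L > 0, S_M > 0, let A : [0,T] × [0,L] → ℝ be continuous with 0 < A(t,x) ≤ S_M for all (t,x), let χ : [0,T] → ℝ with χ(t) > 0, and let v : [0,T] × [0,L] → ℝ satisfy, for each t, that x ↦ v(t,x) is differentiable with ∂ₓv(t,x) = χ(t)/A(t,x), together with the boundary values v(t,0) = v_in(t) and v(t,L) = v_L(t). Then for every t ∈ [0,T]: 0 < χ(t) ≤ (v_L(t) − v_in(t)) · S_M / L. -/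
open Set

theorem mul_sub_le_sub_of_le_hasDerivWithinAt_Icc {f f' : ℝ → ℝ} {a b m : ℝ} (hab : a ≤ b)
    (hf : ∀ x ∈ Icc a b, HasDerivWithinAt f (f' x) (Icc a b) x)
    (hm : ∀ x ∈ Ioo a b, m ≤ f' x) :
    m * (b - a) ≤ f b - f a := by
  have hderiv : ∀ x ∈ interior (Icc a b), HasDerivAt f (f' x) x := by
    intro x hx
    rw [interior_Icc] at hx
    exact (hf x (Ioo_subset_Icc_self hx)).hasDerivAt (Icc_mem_nhds hx.1 hx.2)
  refine (convex_Icc a b).mul_sub_le_image_sub_of_le_deriv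
    (fun x hx => (hf x hx).continuousWithinAt)
    (fun x hx => (hderiv x hx).differentiableAt.differentiableWithinAt) ?_
    a (left_mem_Icc.2 hab) b (right_mem_Icc.2 hab) hab
  intro x hx
  rw [(hderiv x hx).deriv]
  exact hm x (interior_Icc (a := a) (b := b) ▸ hx)

theorem statement3_general
    (T L S_M : ℝ) (hL : 0 < L) (hSM : 0 < S_M)
    (A v : ℝ → ℝ → ℝ) (χ v_in v_L : ℝ → ℝ)
    (hA : ∀ t ∈ Icc (0:ℝ) T, ∀ x ∈ Icc (0:ℝ) L, 0 < A t x ∧ A t x ≤ S_M)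
    (hχpos : ∀ t ∈ Icc (0:ℝ) T, 0 < χ t)
    (hv : ∀ t ∈ Icc (0:ℝ) T, ∀ x ∈ Icc (0:ℝ) L,
        HasDerivWithinAt (fun y => v t y) (χ t / A t x) (Icc 0 L) x)
    (hbc : ∀ t ∈ Icc (0:ℝ) T, v t 0 = v_in t ∧ v t L = v_L t) :
    ∀ t ∈ Icc (0:ℝ) T, 0 < χ t ∧ χ t ≤ (v_L t - v_in t) * S_M / L := by
  intro t ht
  obtain ⟨hv0, hvL⟩ := hbc t ht
  have hslope : χ t / S_M * (L - 0) ≤ v t L - v t 0 :=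
    mul_sub_le_sub_of_le_hasDerivWithinAt_Icc hL.le (hv t ht) fun x hx =>
      have hAx := hA t ht x (Ioo_subset_Icc_self hx)
      div_le_div_of_nonneg_left (hχpos t ht).le hAx.1 hAx.2
  rw [hv0, hvL, sub_zero, div_mul_eq_mul_div, div_le_iff₀ hSM] at hslope
  exact ⟨hχpos t ht, by rw [le_div_iff₀ hL]; linarith⟩

/-- If `0 < A ≤ S_M` is continuous, `χ(t) > 0`, and the velocity `v`
satisfies `∂ₓv(t,x) = χ(t)/A(t,x)` with boundary values `v(t,0) = v_in(t)`,
`v(t,L) = v_L(t)`, then `0 < χ(t) ≤ (v_L(t) − v_in(t)) · S_M / L` for every `t ∈ [0,T]`. -/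
theorem statement3
    (T L S_M : ℝ) (hT : 0 < T) (hL : 0 < L) (hSM : 0 < S_M)
    (A v : ℝ → ℝ → ℝ) (χ v_in v_L : ℝ → ℝ)
    (hAcont : ContinuousOn (fun p : ℝ × ℝ => A p.1 p.2) (Icc 0 T ×ˢ Icc 0 L))
    (hA : ∀ t ∈ Icc (0:ℝ) T, ∀ x ∈ Icc (0:ℝ) L, 0 < A t x ∧ A t x ≤ S_M)
    (hχpos : ∀ t ∈ Icc (0:ℝ) T, 0 < χ t)
    (hv : ∀ t ∈ Icc (0:ℝ) T, ∀ x ∈ Icc (0:ℝ) L,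
        HasDerivWithinAt (fun y => v t y) (χ t / A t x) (Icc 0 L) x)
    (hbc : ∀ t ∈ Icc (0:ℝ) T, v t 0 = v_in t ∧ v t L = v_L t) :
    ∀ t ∈ Icc (0:ℝ) T, 0 < χ t ∧ χ t ≤ (v_L t - v_in t) * S_M / L :=
  statement3_general T L S_M hL hSM A v χ v_in v_L hA hχpos hv hbc
end

section
/- Let T, L > 0, let v ∈ C¹([0,T] × [0,L]) and let A : [0,T] × [0,L] → ℝ be twice continuously differentiable. Assume that ∂ₜA + ∂ₓ(vA) = 0 on (0,T) × (0,L) and that there exists χ : [0,T] → ℝ with A(t,x) ∂ₓv(t,x) = χ(t) for all (t,x). Then B := ∂ₓA satisfies the same conservation law: ∂ₜB + ∂ₓ(vB) = 0 on (0,T) × (0,L). -/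
/-! At an interior point the mixed partials of `A` agree: over a small square, the double
difference of `A` equals `h² ∂ₓ∂ₜA` and `h² ∂ₜ∂ₓA` at two nearby points (two mean value
theorems each way), and continuity of the mixed partials lets the square shrink. Substituting
`A ∂ₓv = χ(t)` into mass conservation gives `∂ₜA = -χ(t) - v ∂ₓA` in `x`, so differentiating in
`x` yields `∂ₜB = ∂ₓ∂ₜA = -∂ₓ(vB)`. -/

open Set Filter Topology

section MixedPartials

variable {f ft fx ftx fxt : ℝ → ℝ → ℝ}

theorem exists_double_diff_eq_mul_mixed {a a' b b' : ℝ} (ha : a < a') (hb : b < b')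
    (hft : ∀ s ∈ Icc a a', ∀ y ∈ Icc b b', HasDerivAt (fun s => f s y) (ft s y) s)
    (hftx : ∀ s ∈ Icc a a', ∀ y ∈ Icc b b', HasDerivAt (fun y => ft s y) (ftx s y) y) :
    ∃ s ∈ Ioo a a', ∃ y ∈ Ioo b b',
      f a' b' - f a' b - f a b' + f a b = (a' - a) * (b' - b) * ftx s y := by
  have hb_mem : b ∈ Icc b b' := left_mem_Icc.2 hb.le
  have hb'_mem : b' ∈ Icc b b' := right_mem_Icc.2 hb.le
  have hdiff : ∀ s ∈ Icc a a',
      HasDerivAt (fun s => f s b' - f s b) (ft s b' - ft s b) s := fun s hs =>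
    (hft s hs b' hb'_mem).sub (hft s hs b hb_mem)
  obtain ⟨s, hs, hs_eq⟩ := exists_hasDerivAt_eq_slope _ _ ha
    (fun s hs => (hdiff s hs).continuousAt.continuousWithinAt)
    (fun s hs => hdiff s (Ioo_subset_Icc_self hs))
  have hs' : s ∈ Icc a a' := Ioo_subset_Icc_self hs
  obtain ⟨y, hy, hy_eq⟩ := exists_hasDerivAt_eq_slope (fun y => ft s y) (ftx s) hb
    (fun y hy => (hftx s hs' y hy).continuousAt.continuousWithinAt)
    (fun y hy => hftx s hs' y (Ioo_subset_Icc_self hy))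
  refine ⟨s, hs, y, hy, ?_⟩
  rw [hy_eq, hs_eq]
  field_simp [sub_ne_zero.2 ha.ne', sub_ne_zero.2 hb.ne']
  ring

variable {a b : ℝ}
  (hft : ∀ᶠ p : ℝ × ℝ in 𝓝 (a, b), HasDerivAt (fun s => f s p.2) (ft p.1 p.2) p.1)
  (hfx : ∀ᶠ p : ℝ × ℝ in 𝓝 (a, b), HasDerivAt (fun y => f p.1 y) (fx p.1 p.2) p.2)
  (hftx : ∀ᶠ p : ℝ × ℝ in 𝓝 (a, b), HasDerivAt (fun y => ft p.1 y) (ftx p.1 p.2) p.2)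
  (hfxt : ∀ᶠ p : ℝ × ℝ in 𝓝 (a, b), HasDerivAt (fun s => fx s p.2) (fxt p.1 p.2) p.1)
include hft hfx hftx hfxt

theorem frequently_mixed_partials_eq :
    ∃ᶠ q : (ℝ × ℝ) × (ℝ × ℝ) in 𝓝 ((a, b), (a, b)), ftx q.1.1 q.1.2 = fxt q.2.1 q.2.2 := by
  obtain ⟨ε₀, hε₀, hball⟩ := Metric.eventually_nhds_iff.1 (hft.and (hfx.and (hftx.and hfxt)))
  refine frequently_iff.2 fun hU => ?_
  obtain ⟨ε, hε, hεU⟩ := Metric.mem_nhds_iff.1 hU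
  obtain ⟨h, hh, hhε⟩ := exists_between (lt_min hε hε₀)
  have hsquare : ∀ s ∈ Icc a (a + h), ∀ y ∈ Icc b (b + h), dist (s, y) (a, b) < min ε ε₀ :=
    fun s hs y hy => by
      rw [Prod.dist_eq, Real.dist_eq, Real.dist_eq, abs_of_nonneg (sub_nonneg.2 hs.1),
        abs_of_nonneg (sub_nonneg.2 hy.1)]
      exact max_lt (by linarith [hs.2]) (by linarith [hy.2])
  have hlocal : ∀ s ∈ Icc a (a + h), ∀ y ∈ Icc b (b + h), _ := fun s hs y hy =>
    hball (lt_of_lt_of_le (hsquare s hs y hy) (min_le_right _ _))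
  obtain ⟨s, hs, y, hy, hsy⟩ := exists_double_diff_eq_mul_mixed (f := f) (ft := ft)
    (ftx := ftx) (lt_add_of_pos_right a hh) (lt_add_of_pos_right b hh)
    (fun s hs y hy => (hlocal s hs y hy).1) (fun s hs y hy => (hlocal s hs y hy).2.2.1)
  obtain ⟨y', hy', s', hs', hsy'⟩ := exists_double_diff_eq_mul_mixed
    (f := fun y s => f s y) (ft := fun y s => fx s y) (ftx := fun y s => fxt s y)
    (lt_add_of_pos_right b hh) (lt_add_of_pos_right a hh)
    (fun y hy s hs => (hlocal s hs y hy).2.1) (fun y hy s hs => (hlocal s hs y hy).2.2.2)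
  refine ⟨((s, y), (s', y')), hεU ?_, ?_⟩
  · have hd := hsquare s (Ioo_subset_Icc_self hs) y (Ioo_subset_Icc_self hy)
    have hd' := hsquare s' (Ioo_subset_Icc_self hs') y' (Ioo_subset_Icc_self hy')
    rw [Metric.mem_ball, Prod.dist_eq]
    exact max_lt (lt_of_lt_of_le hd (min_le_left _ _)) (lt_of_lt_of_le hd' (min_le_left _ _))
  · have hside : (a + h - a) * (b + h - b) ≠ 0 := by simp [hh.ne']
    refine mul_left_cancel₀ hside ?_
    linear_combination hsy' - hsy

theorem mixed_partials_eq
    (hftxc : ContinuousAt (fun p : ℝ × ℝ => ftx p.1 p.2) (a, b))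
    (hfxtc : ContinuousAt (fun p : ℝ × ℝ => fxt p.1 p.2) (a, b)) :
    ftx a b = fxt a b :=
  (isClosed_diagonal (X := ℝ)).mem_of_frequently_of_tendsto
    (frequently_mixed_partials_eq hft hfx hftx hfxt)
    ((hftxc.tendsto.comp (continuous_fst.tendsto _)).prodMk_nhds
      (hfxtc.tendsto.comp (continuous_snd.tendsto _)))

end MixedPartials

section InteriorDerivatives

variable {f f' : ℝ → ℝ → ℝ} {I J : Set ℝ} {z : ℝ × ℝ}

theorem eventually_hasDerivAt_fst_of_prod_mem_nhds
    (h : ∀ t ∈ I, ∀ x ∈ J, HasDerivWithinAt (fun s => f s x) (f' t x) I t)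
    (hz : I ×ˢ J ∈ 𝓝 z) :
    ∀ᶠ p : ℝ × ℝ in 𝓝 z, HasDerivAt (fun s => f s p.2) (f' p.1 p.2) p.1 := by
  filter_upwards [eventually_mem_nhds_iff.2 hz] with ⟨t, x⟩ hp
  obtain ⟨hI, hJ⟩ := prod_mem_nhds_iff.1 hp
  exact (h t (mem_of_mem_nhds hI) x (mem_of_mem_nhds hJ)).hasDerivAt hI

theorem eventually_hasDerivAt_snd_of_prod_mem_nhds
    (h : ∀ t ∈ I, ∀ x ∈ J, HasDerivWithinAt (fun y => f t y) (f' t x) J x)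
    (hz : I ×ˢ J ∈ 𝓝 z) :
    ∀ᶠ p : ℝ × ℝ in 𝓝 z, HasDerivAt (fun y => f p.1 y) (f' p.1 p.2) p.2 := by
  filter_upwards [eventually_mem_nhds_iff.2 hz] with ⟨t, x⟩ hp
  obtain ⟨hI, hJ⟩ := prod_mem_nhds_iff.1 hp
  exact (h t (mem_of_mem_nhds hI) x (mem_of_mem_nhds hJ)).hasDerivAt hJ

end InteriorDerivatives

theorem statement4_general
    (T L : ℝ)
    (v vx A At Ax Atx Axt Axx : ℝ → ℝ → ℝ) (χ : ℝ → ℝ)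
    (hvx : ∀ t ∈ Icc (0:ℝ) T, ∀ x ∈ Icc (0:ℝ) L,
        HasDerivWithinAt (fun y => v t y) (vx t x) (Icc 0 L) x)
    (hAt : ∀ t ∈ Icc (0:ℝ) T, ∀ x ∈ Icc (0:ℝ) L,
        HasDerivWithinAt (fun s => A s x) (At t x) (Icc 0 T) t)
    (hAx : ∀ t ∈ Icc (0:ℝ) T, ∀ x ∈ Icc (0:ℝ) L,
        HasDerivWithinAt (fun y => A t y) (Ax t x) (Icc 0 L) x)
    (hAtx : ∀ t ∈ Icc (0:ℝ) T, ∀ x ∈ Icc (0:ℝ) L,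
        HasDerivWithinAt (fun y => At t y) (Atx t x) (Icc 0 L) x)
    (hAxt : ∀ t ∈ Icc (0:ℝ) T, ∀ x ∈ Icc (0:ℝ) L,
        HasDerivWithinAt (fun s => Ax s x) (Axt t x) (Icc 0 T) t)
    (hAxx : ∀ t ∈ Icc (0:ℝ) T, ∀ x ∈ Icc (0:ℝ) L,
        HasDerivWithinAt (fun y => Ax t y) (Axx t x) (Icc 0 L) x)
    (hAtxcont : ContinuousOn (fun p : ℝ × ℝ => Atx p.1 p.2) (Icc 0 T ×ˢ Icc 0 L))
    (hAxtcont : ContinuousOn (fun p : ℝ × ℝ => Axt p.1 p.2) (Icc 0 T ×ˢ Icc 0 L))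
    -- mass conservation `∂ₜA + ∂ₓ(vA) = 0` on `(0,T) × (0,L)`
    (hmass : ∀ t ∈ Ioo (0:ℝ) T, ∀ x ∈ Ioo (0:ℝ) L,
        At t x + (vx t x * A t x + v t x * Ax t x) = 0)
    -- `A ∂ₓv = χ(t)` for all `(t,x)`
    (hχ : ∀ t ∈ Icc (0:ℝ) T, ∀ x ∈ Icc (0:ℝ) L, A t x * vx t x = χ t) :
    -- `B = ∂ₓA = Ax` satisfies `∂ₜB + ∂ₓ(vB) = 0` on `(0,T) × (0,L)`
    ∀ t ∈ Ioo (0:ℝ) T, ∀ x ∈ Ioo (0:ℝ) L,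
      ∃ q : ℝ, HasDerivAt (fun y => v t y * Ax t y) q x ∧ Axt t x + q = 0 := by
  intro t ht x hx
  have hz : Icc 0 T ×ˢ Icc 0 L ∈ 𝓝 (t, x) :=
    prod_mem_nhds (Icc_mem_nhds ht.1 ht.2) (Icc_mem_nhds hx.1 hx.2)
  have hsymm : Atx t x = Axt t x :=
    mixed_partials_eq (eventually_hasDerivAt_fst_of_prod_mem_nhds hAt hz)
      (eventually_hasDerivAt_snd_of_prod_mem_nhds hAx hz)
      (eventually_hasDerivAt_snd_of_prod_mem_nhds hAtx hz)
      (eventually_hasDerivAt_fst_of_prod_mem_nhds hAxt hz)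
      (hAtxcont.continuousAt hz) (hAxtcont.continuousAt hz)
  have hflux : HasDerivAt (fun y => v t y * Ax t y) (vx t x * Ax t x + v t x * Axx t x) x :=
    (eventually_hasDerivAt_snd_of_prod_mem_nhds hvx hz).self_of_nhds.mul
      (eventually_hasDerivAt_snd_of_prod_mem_nhds hAxx hz).self_of_nhds
  refine ⟨_, hflux, ?_⟩
  have hAt_eq : (fun y => At t y) =ᶠ[𝓝 x] fun y => -χ t - v t y * Ax t y := by
    filter_upwards [Ioo_mem_nhds hx.1 hx.2] with y hy
    linarith [hmass t ht y hy, hχ t (Ioo_subset_Icc_self ht) y (Ioo_subset_Icc_self hy)]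
  have hAtx_eq : Atx t x = -(vx t x * Ax t x + v t x * Axx t x) :=
    (eventually_hasDerivAt_snd_of_prod_mem_nhds hAtx hz).self_of_nhds.unique
      ((hflux.const_sub (-χ t)).congr_of_eventuallyEq hAt_eq)
  linarith

/-- Let `v ∈ C¹([0,T] × [0,L])` (partial derivatives `vt`, `vx`) and let
`A` be twice continuously differentiable (first partials `At`, `Ax`, second partials
`Att`, `Atx`, `Axt`, `Axx`, all continuous on the rectangle).  If the mass conservation
equation `∂ₜA + ∂ₓ(vA) = 0` holds on `(0,T) × (0,L)` and `A ∂ₓv = χ(t)` for all `(t,x)`,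
then `B := ∂ₓA = Ax` satisfies the same conservation law `∂ₜB + ∂ₓ(vB) = 0` on
`(0,T) × (0,L)`. -/
theorem statement4
    (T L : ℝ) (hT : 0 < T) (hL : 0 < L)
    (v vt vx A At Ax Att Atx Axt Axx : ℝ → ℝ → ℝ) (χ : ℝ → ℝ)
    -- `v ∈ C¹([0,T] × [0,L])`
    (hvcont : ContinuousOn (fun p : ℝ × ℝ => v p.1 p.2) (Icc 0 T ×ˢ Icc 0 L))
    (hvt : ∀ t ∈ Icc (0:ℝ) T, ∀ x ∈ Icc (0:ℝ) L,
        HasDerivWithinAt (fun s => v s x) (vt t x) (Icc 0 T) t)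
    (hvx : ∀ t ∈ Icc (0:ℝ) T, ∀ x ∈ Icc (0:ℝ) L,
        HasDerivWithinAt (fun y => v t y) (vx t x) (Icc 0 L) x)
    (hvtcont : ContinuousOn (fun p : ℝ × ℝ => vt p.1 p.2) (Icc 0 T ×ˢ Icc 0 L))
    (hvxcont : ContinuousOn (fun p : ℝ × ℝ => vx p.1 p.2) (Icc 0 T ×ˢ Icc 0 L))
    -- `A` is twice continuously differentiable on `[0,T] × [0,L]`
    (hAcont : ContinuousOn (fun p : ℝ × ℝ => A p.1 p.2) (Icc 0 T ×ˢ Icc 0 L))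
    (hAt : ∀ t ∈ Icc (0:ℝ) T, ∀ x ∈ Icc (0:ℝ) L,
        HasDerivWithinAt (fun s => A s x) (At t x) (Icc 0 T) t)
    (hAx : ∀ t ∈ Icc (0:ℝ) T, ∀ x ∈ Icc (0:ℝ) L,
        HasDerivWithinAt (fun y => A t y) (Ax t x) (Icc 0 L) x)
    (hAtcont : ContinuousOn (fun p : ℝ × ℝ => At p.1 p.2) (Icc 0 T ×ˢ Icc 0 L))
    (hAxcont : ContinuousOn (fun p : ℝ × ℝ => Ax p.1 p.2) (Icc 0 T ×ˢ Icc 0 L))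
    (hAtt : ∀ t ∈ Icc (0:ℝ) T, ∀ x ∈ Icc (0:ℝ) L,
        HasDerivWithinAt (fun s => At s x) (Att t x) (Icc 0 T) t)
    (hAtx : ∀ t ∈ Icc (0:ℝ) T, ∀ x ∈ Icc (0:ℝ) L,
        HasDerivWithinAt (fun y => At t y) (Atx t x) (Icc 0 L) x)
    (hAxt : ∀ t ∈ Icc (0:ℝ) T, ∀ x ∈ Icc (0:ℝ) L,
        HasDerivWithinAt (fun s => Ax s x) (Axt t x) (Icc 0 T) t)
    (hAxx : ∀ t ∈ Icc (0:ℝ) T, ∀ x ∈ Icc (0:ℝ) L,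
        HasDerivWithinAt (fun y => Ax t y) (Axx t x) (Icc 0 L) x)
    (hAttcont : ContinuousOn (fun p : ℝ × ℝ => Att p.1 p.2) (Icc 0 T ×ˢ Icc 0 L))
    (hAtxcont : ContinuousOn (fun p : ℝ × ℝ => Atx p.1 p.2) (Icc 0 T ×ˢ Icc 0 L))
    (hAxtcont : ContinuousOn (fun p : ℝ × ℝ => Axt p.1 p.2) (Icc 0 T ×ˢ Icc 0 L))
    (hAxxcont : ContinuousOn (fun p : ℝ × ℝ => Axx p.1 p.2) (Icc 0 T ×ˢ Icc 0 L))
    -- mass conservation `∂ₜA + ∂ₓ(vA) = 0` on `(0,T) × (0,L)`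
    (hmass : ∀ t ∈ Ioo (0:ℝ) T, ∀ x ∈ Ioo (0:ℝ) L,
        At t x + (vx t x * A t x + v t x * Ax t x) = 0)
    -- `A ∂ₓv = χ(t)` for all `(t,x)`
    (hχ : ∀ t ∈ Icc (0:ℝ) T, ∀ x ∈ Icc (0:ℝ) L, A t x * vx t x = χ t) :
    -- `B = ∂ₓA = Ax` satisfies `∂ₜB + ∂ₓ(vB) = 0` on `(0,T) × (0,L)`
    ∀ t ∈ Ioo (0:ℝ) T, ∀ x ∈ Ioo (0:ℝ) L,
      ∃ q : ℝ, HasDerivAt (fun y => v t y * Ax t y) q x ∧ Axt t x + q = 0 :=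
  statement4_general T L v vx A At Ax Atx Axt Axx χ hvx hAt hAx hAtx hAxt hAxx hAtxcont hAxtcont
    hmass hχ
end

section
/- Let T, L > 0, let v ∈ C¹([0,T] × [0,L]) and let A : [0,T] × [0,L] → ℝ be twice continuously differentiable with A(t,x) > 0 everywhere. Assume ∂ₜA + ∂ₓ(vA) = 0 on (0,T) × (0,L) and that there exists χ : [0,T] → ℝ with A(t,x) ∂ₓv(t,x) = χ(t) for all (t,x). Then w := ∂ₓ(log A) satisfies the pure transport equation ∂ₜw + v ∂ₓw = 0 on (0,T) × (0,L). -/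
/-!
Since `A ∂ₓv = χ(t)` does not depend on `x`, mass conservation reads `∂ₜA = -χ(t) - v ∂ₓA`, and
differentiating in `x` gives `∂ₓ∂ₜA = -∂ₓv ∂ₓA - v ∂ₓ²A`. As `A` is `C²`, this is also `∂ₜ∂ₓA`
(symmetry of mixed partials, via the Fréchet derivative of `A` and its symmetric second
derivative). Substituting both expressions into the quotient rule for `w = ∂ₓA / A`, the sum
`∂ₜw + v ∂ₓw` cancels identically.
-/

open Set Filter Topology ContinuousLinearMap

section PartialDerivatives

variable {f f₁ f₂ : ℝ → ℝ → ℝ} {s : Set (ℝ × ℝ)}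

theorem hasFDerivAt_uncurry_of_hasDerivAt_of_continuousOn (hs : IsOpen s)
    (df₁ : ∀ v ∈ s, HasDerivAt (f · v.2) (f₁ v.1 v.2) v.1)
    (df₂ : ∀ v ∈ s, HasDerivAt (f v.1 ·) (f₂ v.1 v.2) v.2)
    (cf₁ : ContinuousOn (fun v : ℝ × ℝ => f₁ v.1 v.2) s)
    (cf₂ : ContinuousOn (fun v : ℝ × ℝ => f₂ v.1 v.2) s) {u : ℝ × ℝ} (hu : u ∈ s) :
    HasFDerivAt (fun v : ℝ × ℝ => f v.1 v.2)
      (f₁ u.1 u.2 • fst ℝ ℝ ℝ + f₂ u.1 u.2 • snd ℝ ℝ ℝ) u := by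
  have hsu : s ∈ 𝓝 u := hs.mem_nhds hu
  have smulRight_cont : Continuous (smulRight (1 : ℝ →L[ℝ] ℝ)) := (smulRightL ℝ ℝ ℝ 1).continuous
  have key := hasStrictFDerivAt_uncurry_coprod (u := u) (f := f)
    (f₁ := fun t x => smulRight 1 (f₁ t x)) (f₂ := fun t x => smulRight 1 (f₂ t x))
    (eventually_of_mem hsu fun v hv => (df₁ v hv).hasFDerivAt)
    (eventually_of_mem hsu fun v hv => (df₂ v hv).hasFDerivAt)
    (smulRight_cont.continuousAt.comp (cf₁.continuousAt hsu))
    (smulRight_cont.continuousAt.comp (cf₂.continuousAt hsu))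
  refine key.hasFDerivAt.congr_fderiv ?_
  ext <;> simp [Function.HasUncurry.uncurry]

theorem mixed_partials_eq_s5 {f₁₁ f₁₂ f₂₁ f₂₂ : ℝ → ℝ → ℝ} (hs : IsOpen s)
    (df₁ : ∀ v ∈ s, HasDerivAt (f · v.2) (f₁ v.1 v.2) v.1)
    (df₂ : ∀ v ∈ s, HasDerivAt (f v.1 ·) (f₂ v.1 v.2) v.2)
    (df₁₁ : ∀ v ∈ s, HasDerivAt (f₁ · v.2) (f₁₁ v.1 v.2) v.1)
    (df₁₂ : ∀ v ∈ s, HasDerivAt (f₁ v.1 ·) (f₁₂ v.1 v.2) v.2)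
    (df₂₁ : ∀ v ∈ s, HasDerivAt (f₂ · v.2) (f₂₁ v.1 v.2) v.1)
    (df₂₂ : ∀ v ∈ s, HasDerivAt (f₂ v.1 ·) (f₂₂ v.1 v.2) v.2)
    (cf₁₁ : ContinuousOn (fun v : ℝ × ℝ => f₁₁ v.1 v.2) s)
    (cf₁₂ : ContinuousOn (fun v : ℝ × ℝ => f₁₂ v.1 v.2) s)
    (cf₂₁ : ContinuousOn (fun v : ℝ × ℝ => f₂₁ v.1 v.2) s)
    (cf₂₂ : ContinuousOn (fun v : ℝ × ℝ => f₂₂ v.1 v.2) s) {u : ℝ × ℝ} (hu : u ∈ s) :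
    f₁₂ u.1 u.2 = f₂₁ u.1 u.2 := by
  have d₁ := fun v (hv : v ∈ s) =>
    hasFDerivAt_uncurry_of_hasDerivAt_of_continuousOn hs df₁₁ df₁₂ cf₁₁ cf₁₂ hv
  have d₂ := fun v (hv : v ∈ s) =>
    hasFDerivAt_uncurry_of_hasDerivAt_of_continuousOn hs df₂₁ df₂₂ cf₂₁ cf₂₂ hv
  have d : ∀ᶠ v in 𝓝 u, HasFDerivAt (fun v : ℝ × ℝ => f v.1 v.2)
      (f₁ v.1 v.2 • fst ℝ ℝ ℝ + f₂ v.1 v.2 • snd ℝ ℝ ℝ) v :=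
    eventually_of_mem (hs.mem_nhds hu) fun v hv =>
      hasFDerivAt_uncurry_of_hasDerivAt_of_continuousOn hs df₁ df₂
        (fun w hw => (d₁ w hw).continuousAt.continuousWithinAt)
        (fun w hw => (d₂ w hw).continuousAt.continuousWithinAt) hv
  have hsymm := second_derivative_symmetric_of_eventually d
    (((d₁ u hu).smul_const (fst ℝ ℝ ℝ)).add ((d₂ u hu).smul_const (snd ℝ ℝ ℝ))) (0, 1) (1, 0)
  simpa using hsymm

end PartialDerivatives

section Rectangle

variable {a b c d : ℝ} {g g' : ℝ → ℝ → ℝ}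

theorem hasDerivAt_fst_of_hasDerivWithinAt_Icc
    (h : ∀ t ∈ Icc a b, ∀ x ∈ Icc c d, HasDerivWithinAt (g · x) (g' t x) (Icc a b) t) :
    ∀ v ∈ Ioo a b ×ˢ Ioo c d, HasDerivAt (g · v.2) (g' v.1 v.2) v.1 := fun v hv =>
  (h v.1 (Ioo_subset_Icc_self hv.1) v.2 (Ioo_subset_Icc_self hv.2)).hasDerivAt
    (Icc_mem_nhds hv.1.1 hv.1.2)

theorem hasDerivAt_snd_of_hasDerivWithinAt_Icc
    (h : ∀ t ∈ Icc a b, ∀ x ∈ Icc c d, HasDerivWithinAt (g t ·) (g' t x) (Icc c d) x) :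
    ∀ v ∈ Ioo a b ×ˢ Ioo c d, HasDerivAt (g v.1 ·) (g' v.1 v.2) v.2 := fun v hv =>
  (h v.1 (Ioo_subset_Icc_self hv.1) v.2 (Ioo_subset_Icc_self hv.2)).hasDerivAt
    (Icc_mem_nhds hv.2.1 hv.2.2)

end Rectangle

theorem statement5_general
    (T L : ℝ)
    (v vx A At Ax Att Atx Axt Axx : ℝ → ℝ → ℝ) (χ : ℝ → ℝ)
    -- `v ∈ C¹([0,T] × [0,L])`
    (hvx : ∀ t ∈ Icc (0:ℝ) T, ∀ x ∈ Icc (0:ℝ) L,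
        HasDerivWithinAt (fun y => v t y) (vx t x) (Icc 0 L) x)
    -- `A` is strictly positive and twice continuously differentiable
    (hApos : ∀ t ∈ Icc (0:ℝ) T, ∀ x ∈ Icc (0:ℝ) L, 0 < A t x)
    (hAt : ∀ t ∈ Icc (0:ℝ) T, ∀ x ∈ Icc (0:ℝ) L,
        HasDerivWithinAt (fun s => A s x) (At t x) (Icc 0 T) t)
    (hAx : ∀ t ∈ Icc (0:ℝ) T, ∀ x ∈ Icc (0:ℝ) L,
        HasDerivWithinAt (fun y => A t y) (Ax t x) (Icc 0 L) x)
    (hAtt : ∀ t ∈ Icc (0:ℝ) T, ∀ x ∈ Icc (0:ℝ) L,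
        HasDerivWithinAt (fun s => At s x) (Att t x) (Icc 0 T) t)
    (hAtx : ∀ t ∈ Icc (0:ℝ) T, ∀ x ∈ Icc (0:ℝ) L,
        HasDerivWithinAt (fun y => At t y) (Atx t x) (Icc 0 L) x)
    (hAxt : ∀ t ∈ Icc (0:ℝ) T, ∀ x ∈ Icc (0:ℝ) L,
        HasDerivWithinAt (fun s => Ax s x) (Axt t x) (Icc 0 T) t)
    (hAxx : ∀ t ∈ Icc (0:ℝ) T, ∀ x ∈ Icc (0:ℝ) L,
        HasDerivWithinAt (fun y => Ax t y) (Axx t x) (Icc 0 L) x)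
    (hAttcont : ContinuousOn (fun p : ℝ × ℝ => Att p.1 p.2) (Icc 0 T ×ˢ Icc 0 L))
    (hAtxcont : ContinuousOn (fun p : ℝ × ℝ => Atx p.1 p.2) (Icc 0 T ×ˢ Icc 0 L))
    (hAxtcont : ContinuousOn (fun p : ℝ × ℝ => Axt p.1 p.2) (Icc 0 T ×ˢ Icc 0 L))
    (hAxxcont : ContinuousOn (fun p : ℝ × ℝ => Axx p.1 p.2) (Icc 0 T ×ˢ Icc 0 L))
    -- mass conservation `∂ₜA + ∂ₓ(vA) = 0` on `(0,T) × (0,L)`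
    (hmass : ∀ t ∈ Ioo (0:ℝ) T, ∀ x ∈ Ioo (0:ℝ) L,
        At t x + (vx t x * A t x + v t x * Ax t x) = 0)
    -- `A ∂ₓv = χ(t)` for all `(t,x)`
    (hχ : ∀ t ∈ Icc (0:ℝ) T, ∀ x ∈ Icc (0:ℝ) L, A t x * vx t x = χ t) :
    -- `w = ∂ₓ(log A) = Ax / A` satisfies `∂ₜw + v ∂ₓw = 0` on `(0,T) × (0,L)`
    ∀ t ∈ Ioo (0:ℝ) T, ∀ x ∈ Ioo (0:ℝ) L,
      ∃ wt wx : ℝ,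
        HasDerivAt (fun s => Ax s x / A s x) wt t ∧
        HasDerivAt (fun y => Ax t y / A t y) wx x ∧
        wt + v t x * wx = 0 := by
  intro t ht x hx
  have hrect : Ioo 0 T ×ˢ Ioo 0 L ⊆ Icc (0:ℝ) T ×ˢ Icc 0 L :=
    prod_mono Ioo_subset_Icc_self Ioo_subset_Icc_self
  have hu : (t, x) ∈ Ioo 0 T ×ˢ Ioo 0 L := ⟨ht, hx⟩
  have hAxt_eq : Axt t x = Atx t x :=
    (mixed_partials_eq_s5 (isOpen_Ioo.prod isOpen_Ioo)
      (hasDerivAt_fst_of_hasDerivWithinAt_Icc hAt) (hasDerivAt_snd_of_hasDerivWithinAt_Icc hAx)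
      (hasDerivAt_fst_of_hasDerivWithinAt_Icc hAtt) (hasDerivAt_snd_of_hasDerivWithinAt_Icc hAtx)
      (hasDerivAt_fst_of_hasDerivWithinAt_Icc hAxt) (hasDerivAt_snd_of_hasDerivWithinAt_Icc hAxx)
      (hAttcont.mono hrect) (hAtxcont.mono hrect) (hAxtcont.mono hrect) (hAxxcont.mono hrect)
      hu).symm
  have hAtx_eq : Atx t x = -(vx t x * Ax t x + v t x * Axx t x) := by
    have hmass' : (At t ·) =ᶠ[𝓝 x] fun y => -χ t - v t y * Ax t y := by
      filter_upwards [Ioo_mem_nhds hx.1 hx.2] with y hy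
      linear_combination hmass t ht y hy - hχ t (Ioo_subset_Icc_self ht) y (Ioo_subset_Icc_self hy)
    have hvAx := ((hasDerivAt_snd_of_hasDerivWithinAt_Icc hvx _ hu).mul
      (hasDerivAt_snd_of_hasDerivWithinAt_Icc hAxx _ hu)).const_sub (-χ t)
    refine (hasDerivAt_snd_of_hasDerivWithinAt_Icc hAtx _ hu).unique ?_
    simpa using hvAx.congr_of_eventuallyEq hmass'
  have hA : A t x ≠ 0 := (hApos t (Ioo_subset_Icc_self ht) x (Ioo_subset_Icc_self hx)).ne'
  refine ⟨_, _, (hasDerivAt_fst_of_hasDerivWithinAt_Icc hAxt _ hu).div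
    (hasDerivAt_fst_of_hasDerivWithinAt_Icc hAt _ hu) hA,
    (hasDerivAt_snd_of_hasDerivWithinAt_Icc hAxx _ hu).div
    (hasDerivAt_snd_of_hasDerivWithinAt_Icc hAx _ hu) hA, ?_⟩
  rw [hAxt_eq, hAtx_eq, eq_neg_of_add_eq_zero_left (hmass t ht x hx)]
  field_simp
  ring

/-- Let `v ∈ C¹([0,T] × [0,L])` (partial derivatives `vt`, `vx`) and let
`A > 0` be twice continuously differentiable (first partials `At`, `Ax`, second partials
`Att`, `Atx`, `Axt`, `Axx`, all continuous on the rectangle).  If `∂ₜA + ∂ₓ(vA) = 0` on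
`(0,T) × (0,L)` and `A ∂ₓv = χ(t)` for all `(t,x)`, then `w := ∂ₓ(log A) = Ax / A`
satisfies the pure transport equation `∂ₜw + v ∂ₓw = 0` on `(0,T) × (0,L)`. -/
theorem statement5
    (T L : ℝ) (hT : 0 < T) (hL : 0 < L)
    (v vt vx A At Ax Att Atx Axt Axx : ℝ → ℝ → ℝ) (χ : ℝ → ℝ)
    -- `v ∈ C¹([0,T] × [0,L])`
    (hvcont : ContinuousOn (fun p : ℝ × ℝ => v p.1 p.2) (Icc 0 T ×ˢ Icc 0 L))
    (hvt : ∀ t ∈ Icc (0:ℝ) T, ∀ x ∈ Icc (0:ℝ) L,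
        HasDerivWithinAt (fun s => v s x) (vt t x) (Icc 0 T) t)
    (hvx : ∀ t ∈ Icc (0:ℝ) T, ∀ x ∈ Icc (0:ℝ) L,
        HasDerivWithinAt (fun y => v t y) (vx t x) (Icc 0 L) x)
    (hvtcont : ContinuousOn (fun p : ℝ × ℝ => vt p.1 p.2) (Icc 0 T ×ˢ Icc 0 L))
    (hvxcont : ContinuousOn (fun p : ℝ × ℝ => vx p.1 p.2) (Icc 0 T ×ˢ Icc 0 L))
    -- `A` is strictly positive and twice continuously differentiable
    (hApos : ∀ t ∈ Icc (0:ℝ) T, ∀ x ∈ Icc (0:ℝ) L, 0 < A t x)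
    (hAcont : ContinuousOn (fun p : ℝ × ℝ => A p.1 p.2) (Icc 0 T ×ˢ Icc 0 L))
    (hAt : ∀ t ∈ Icc (0:ℝ) T, ∀ x ∈ Icc (0:ℝ) L,
        HasDerivWithinAt (fun s => A s x) (At t x) (Icc 0 T) t)
    (hAx : ∀ t ∈ Icc (0:ℝ) T, ∀ x ∈ Icc (0:ℝ) L,
        HasDerivWithinAt (fun y => A t y) (Ax t x) (Icc 0 L) x)
    (hAtcont : ContinuousOn (fun p : ℝ × ℝ => At p.1 p.2) (Icc 0 T ×ˢ Icc 0 L))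
    (hAxcont : ContinuousOn (fun p : ℝ × ℝ => Ax p.1 p.2) (Icc 0 T ×ˢ Icc 0 L))
    (hAtt : ∀ t ∈ Icc (0:ℝ) T, ∀ x ∈ Icc (0:ℝ) L,
        HasDerivWithinAt (fun s => At s x) (Att t x) (Icc 0 T) t)
    (hAtx : ∀ t ∈ Icc (0:ℝ) T, ∀ x ∈ Icc (0:ℝ) L,
        HasDerivWithinAt (fun y => At t y) (Atx t x) (Icc 0 L) x)
    (hAxt : ∀ t ∈ Icc (0:ℝ) T, ∀ x ∈ Icc (0:ℝ) L,
        HasDerivWithinAt (fun s => Ax s x) (Axt t x) (Icc 0 T) t)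
    (hAxx : ∀ t ∈ Icc (0:ℝ) T, ∀ x ∈ Icc (0:ℝ) L,
        HasDerivWithinAt (fun y => Ax t y) (Axx t x) (Icc 0 L) x)
    (hAttcont : ContinuousOn (fun p : ℝ × ℝ => Att p.1 p.2) (Icc 0 T ×ˢ Icc 0 L))
    (hAtxcont : ContinuousOn (fun p : ℝ × ℝ => Atx p.1 p.2) (Icc 0 T ×ˢ Icc 0 L))
    (hAxtcont : ContinuousOn (fun p : ℝ × ℝ => Axt p.1 p.2) (Icc 0 T ×ˢ Icc 0 L))
    (hAxxcont : ContinuousOn (fun p : ℝ × ℝ => Axx p.1 p.2) (Icc 0 T ×ˢ Icc 0 L))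
    -- mass conservation `∂ₜA + ∂ₓ(vA) = 0` on `(0,T) × (0,L)`
    (hmass : ∀ t ∈ Ioo (0:ℝ) T, ∀ x ∈ Ioo (0:ℝ) L,
        At t x + (vx t x * A t x + v t x * Ax t x) = 0)
    -- `A ∂ₓv = χ(t)` for all `(t,x)`
    (hχ : ∀ t ∈ Icc (0:ℝ) T, ∀ x ∈ Icc (0:ℝ) L, A t x * vx t x = χ t) :
    -- `w = ∂ₓ(log A) = Ax / A` satisfies `∂ₜw + v ∂ₓw = 0` on `(0,T) × (0,L)`
    ∀ t ∈ Ioo (0:ℝ) T, ∀ x ∈ Ioo (0:ℝ) L,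
      ∃ wt wx : ℝ,
        HasDerivAt (fun s => Ax s x / A s x) wt t ∧
        HasDerivAt (fun y => Ax t y / A t y) wx x ∧
        wt + v t x * wx = 0 :=
  statement5_general T L v vx A At Ax Att Atx Axt Axx χ hvx hApos hAt hAx hAtt hAtx hAxt hAxx
    hAttcont hAtxcont hAxtcont hAxxcont hmass hχ
end

section
/- Let t₀, L > 0, let v : [0,t₀] × [0,L] → ℝ be continuous with v(t,x) > 0 everywhere, and let w ∈ C¹([0,t₀] × [0,L]) satisfy ∂ₜw + v ∂ₓw = 0 on (0,t₀) × (0,L). Let m, M ∈ ℝ and suppose m ≤ w(0,x) ≤ M for all x ∈ [0,L] and m ≤ w(t,0) ≤ M for all t ∈ [0,t₀]. Then m ≤ w(t,x) ≤ M for all (t,x) ∈ [0,t₀] × [0,L]. -/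
open Set Filter Topology

/-! A maximum of `w - ε (t + x)` over a closed rectangle cannot lie at a point with `t, x > 0`:
there the difference quotients from the left make both partial derivatives of `w` at least `ε`,
so `wt + v wx ≥ ε > 0`. Hence the maximum sits on `{t = 0} ∪ {x = 0}`, and `ε → 0` gives
`w ≤ M`. Since the equation is only known in the open rectangle, this is applied to
`[0, t] × [0, x]` with `t < t₀`, `x < L`, and continuity of `w` extends the bound to the closed
rectangle. The lower bound is the upper bound for `-w`. -/

theorem HasDerivWithinAt.nonneg_of_isMaxOn_Icc {f : ℝ → ℝ} {f' a b c : ℝ} (hc : c ∈ Icc a b)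
    (hac : a < c) (hf : HasDerivWithinAt f f' (Icc a b) c) (hmax : IsMaxOn f (Icc a b) c) :
    0 ≤ f' := by
  have hcone : a - c ∈ posTangentConeAt (Icc a b) c :=
    sub_mem_posTangentConeAt_of_segment_subset
      ((convex_Icc a b).segment_subset hc (left_mem_Icc.2 (hc.1.trans hc.2)))
  have := hmax.localize.hasFDerivWithinAt_nonpos hf.hasFDerivWithinAt hcone
  simp only [ContinuousLinearMap.toSpanSingleton_apply, smul_eq_mul] at this
  exact nonneg_of_mul_nonpos_right this (sub_neg.2 hac)

section TransportSubsolution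

variable {a b M : ℝ} {v w wt wx : ℝ → ℝ → ℝ}
  (hv : ∀ t ∈ Ioc 0 a, ∀ x ∈ Ioc 0 b, 0 ≤ v t x)
  (hw : ContinuousOn (fun p : ℝ × ℝ => w p.1 p.2) (Icc 0 a ×ˢ Icc 0 b))
  (hwt : ∀ t ∈ Ioc 0 a, ∀ x ∈ Ioc 0 b,
    HasDerivWithinAt (fun s => w s x) (wt t x) (Icc 0 a) t)
  (hwx : ∀ t ∈ Ioc 0 a, ∀ x ∈ Ioc 0 b,
    HasDerivWithinAt (fun y => w t y) (wx t x) (Icc 0 b) x)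
  (hsub : ∀ t ∈ Ioc 0 a, ∀ x ∈ Ioc 0 b, wt t x + v t x * wx t x ≤ 0)
  (hinit : ∀ x ∈ Icc 0 b, w 0 x ≤ M) (hbdry : ∀ t ∈ Icc 0 a, w t 0 ≤ M)
include hv hw hwt hwx hsub hinit hbdry

theorem sub_mul_add_le_of_transport_subsolution {ε : ℝ} (hε : 0 < ε) :
    ∀ t ∈ Icc 0 a, ∀ x ∈ Icc 0 b, w t x - ε * (t + x) ≤ M := by
  intro t ht x hx
  set u : ℝ × ℝ → ℝ := fun p => w p.1 p.2 - ε * (p.1 + p.2)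
  have hu : ContinuousOn u (Icc 0 a ×ˢ Icc 0 b) := hw.sub (by fun_prop)
  obtain ⟨p, ⟨hp₁, hp₂⟩, hmax⟩ :=
    (isCompact_Icc.prod isCompact_Icc).exists_isMaxOn ⟨(t, x), ht, hx⟩ hu
  suffices u p ≤ M from (hmax (mk_mem_prod ht hx)).trans this
  rcases hp₁.1.eq_or_lt with h₁ | h₁
  · have := hinit p.2 hp₂
    simp only [u, ← h₁]
    nlinarith [hp₂.1]
  rcases hp₂.1.eq_or_lt with h₂ | h₂
  · have := hbdry p.1 hp₁
    simp only [u, ← h₂]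
    nlinarith [hp₁.1]
  have hdt : ε ≤ wt p.1 p.2 := by
    have hd := (hwt p.1 ⟨h₁, hp₁.2⟩ p.2 ⟨h₂, hp₂.2⟩).sub
      (((hasDerivWithinAt_id p.1 (Icc 0 a)).add_const p.2).const_mul ε)
    have := hd.nonneg_of_isMaxOn_Icc hp₁ h₁ fun s hs => hmax (mk_mem_prod hs hp₂)
    linarith
  have hdx : ε ≤ wx p.1 p.2 := by
    have hd := (hwx p.1 ⟨h₁, hp₁.2⟩ p.2 ⟨h₂, hp₂.2⟩).sub
      (((hasDerivWithinAt_id p.2 (Icc 0 b)).const_add p.1).const_mul ε)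
    have := hd.nonneg_of_isMaxOn_Icc hp₂ h₂ fun s hs => hmax (mk_mem_prod hp₁ hs)
    linarith
  nlinarith [hv p.1 ⟨h₁, hp₁.2⟩ p.2 ⟨h₂, hp₂.2⟩, hsub p.1 ⟨h₁, hp₁.2⟩ p.2 ⟨h₂, hp₂.2⟩]

theorem le_of_transport_subsolution_s6 : ∀ t ∈ Icc 0 a, ∀ x ∈ Icc 0 b, w t x ≤ M := by
  intro t ht x hx
  have hlim : Tendsto (fun ε : ℝ => M + ε * (t + x)) (𝓝[>] 0) (𝓝 M) :=
    ((continuous_const.add (continuous_id.mul continuous_const)).tendsto' 0 M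
      (by simp)).mono_left nhdsWithin_le_nhds
  refine ge_of_tendsto hlim (eventually_nhdsWithin_of_forall fun ε hε => ?_)
  have := sub_mul_add_le_of_transport_subsolution hv hw hwt hwx hsub hinit hbdry hε t ht x hx
  linarith

end TransportSubsolution

theorem transport_le_of_boundary_le {t₀ L M : ℝ} {v w wt wx : ℝ → ℝ → ℝ}
    (ht₀ : 0 < t₀) (hL : 0 < L)
    (hv : ∀ t ∈ Ioo 0 t₀, ∀ x ∈ Ioo 0 L, 0 ≤ v t x)
    (hw : ContinuousOn (fun p : ℝ × ℝ => w p.1 p.2) (Icc 0 t₀ ×ˢ Icc 0 L))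
    (hwt : ∀ t ∈ Icc 0 t₀, ∀ x ∈ Icc 0 L,
      HasDerivWithinAt (fun s => w s x) (wt t x) (Icc 0 t₀) t)
    (hwx : ∀ t ∈ Icc 0 t₀, ∀ x ∈ Icc 0 L,
      HasDerivWithinAt (fun y => w t y) (wx t x) (Icc 0 L) x)
    (hsub : ∀ t ∈ Ioo 0 t₀, ∀ x ∈ Ioo 0 L, wt t x + v t x * wx t x ≤ 0)
    (hinit : ∀ x ∈ Icc 0 L, w 0 x ≤ M) (hbdry : ∀ t ∈ Icc 0 t₀, w t 0 ≤ M) :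
    ∀ t ∈ Icc 0 t₀, ∀ x ∈ Icc 0 L, w t x ≤ M := by
  have hshrunk : ∀ p ∈ Ico 0 t₀ ×ˢ Ico 0 L, w p.1 p.2 ≤ M := by
    rintro ⟨t, x⟩ ⟨ht, hx⟩
    have hIcct : Icc 0 t ⊆ Icc 0 t₀ := Icc_subset_Icc_right ht.2.le
    have hIccx : Icc 0 x ⊆ Icc 0 L := Icc_subset_Icc_right hx.2.le
    have hIoct : Ioc 0 t ⊆ Ioo 0 t₀ := Ioc_subset_Ioo_right ht.2
    have hIocx : Ioc 0 x ⊆ Ioo 0 L := Ioc_subset_Ioo_right hx.2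
    exact le_of_transport_subsolution_s6 (fun s hs y hy => hv s (hIoct hs) y (hIocx hy))
      (hw.mono (prod_mono hIcct hIccx))
      (fun s hs y hy => (hwt s (hIcct (Ioc_subset_Icc_self hs)) y
        (hIccx (Ioc_subset_Icc_self hy))).mono hIcct)
      (fun s hs y hy => (hwx s (hIcct (Ioc_subset_Icc_self hs)) y
        (hIccx (Ioc_subset_Icc_self hy))).mono hIccx)
      (fun s hs y hy => hsub s (hIoct hs) y (hIocx hy))
      (fun y hy => hinit y (hIccx hy)) (fun s hs => hbdry s (hIcct hs))
      t (right_mem_Icc.2 ht.1) x (right_mem_Icc.2 hx.1)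
  intro t ht x hx
  have hcl : (t, x) ∈ closure (Ico 0 t₀ ×ˢ Ico 0 L) := by
    rw [closure_prod_eq, closure_Ico ht₀.ne, closure_Ico hL.ne]
    exact ⟨ht, hx⟩
  exact ContinuousWithinAt.closure_le (f := fun p : ℝ × ℝ => w p.1 p.2) (g := fun _ => M) hcl
    ((hw (t, x) ⟨ht, hx⟩).mono (prod_mono Ico_subset_Icc_self Ico_subset_Icc_self))
    continuousWithinAt_const hshrunk

theorem statement6_general
    (t₀ L : ℝ) (ht₀ : 0 < t₀) (hL : 0 < L)
    (v w wt wx : ℝ → ℝ → ℝ) (m M : ℝ)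
    (hvpos : ∀ t ∈ Icc (0:ℝ) t₀, ∀ x ∈ Icc (0:ℝ) L, 0 < v t x)
    (hwcont : ContinuousOn (fun p : ℝ × ℝ => w p.1 p.2) (Icc 0 t₀ ×ˢ Icc 0 L))
    (hwt : ∀ t ∈ Icc (0:ℝ) t₀, ∀ x ∈ Icc (0:ℝ) L,
        HasDerivWithinAt (fun s => w s x) (wt t x) (Icc 0 t₀) t)
    (hwx : ∀ t ∈ Icc (0:ℝ) t₀, ∀ x ∈ Icc (0:ℝ) L,
        HasDerivWithinAt (fun y => w t y) (wx t x) (Icc 0 L) x)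
    (heq : ∀ t ∈ Ioo (0:ℝ) t₀, ∀ x ∈ Ioo (0:ℝ) L, wt t x + v t x * wx t x = 0)
    (hinit : ∀ x ∈ Icc (0:ℝ) L, m ≤ w 0 x ∧ w 0 x ≤ M)
    (hbdry : ∀ t ∈ Icc (0:ℝ) t₀, m ≤ w t 0 ∧ w t 0 ≤ M) :
    ∀ t ∈ Icc (0:ℝ) t₀, ∀ x ∈ Icc (0:ℝ) L, m ≤ w t x ∧ w t x ≤ M := by
  have hv : ∀ t ∈ Ioo (0:ℝ) t₀, ∀ x ∈ Ioo (0:ℝ) L, 0 ≤ v t x := fun t ht x hx =>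
    (hvpos t (Ioo_subset_Icc_self ht) x (Ioo_subset_Icc_self hx)).le
  have hupper := transport_le_of_boundary_le ht₀ hL hv hwcont hwt hwx
    (fun t ht x hx => (heq t ht x hx).le) (fun x hx => (hinit x hx).2) (fun t ht => (hbdry t ht).2)
  have hlower := transport_le_of_boundary_le (w := fun t x => -w t x) (M := -m) ht₀ hL hv
    hwcont.neg (fun t ht x hx => (hwt t ht x hx).neg) (fun t ht x hx => (hwx t ht x hx).neg)
    (fun t ht x hx => le_of_eq (by linear_combination -heq t ht x hx))
    (fun x hx => neg_le_neg (hinit x hx).1) (fun t ht => neg_le_neg (hbdry t ht).1)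
  exact fun t ht x hx => ⟨neg_le_neg_iff.1 (hlower t ht x hx), hupper t ht x hx⟩

/-- Maximum principle for the transport equation `∂ₜw + v ∂ₓw = 0` with
continuous strictly positive speed `v`: if `w ∈ C¹([0,t₀] × [0,L])` (partial derivatives
`wt`, `wx`, continuous on the closed rectangle) satisfies the equation on
`(0,t₀) × (0,L)` and `m ≤ w ≤ M` on `{t = 0}` and on `{x = 0}`, then `m ≤ w ≤ M` on all
of `[0,t₀] × [0,L]`. -/
theorem statement6
    (t₀ L : ℝ) (ht₀ : 0 < t₀) (hL : 0 < L)
    (v w wt wx : ℝ → ℝ → ℝ) (m M : ℝ)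
    (hvcont : ContinuousOn (fun p : ℝ × ℝ => v p.1 p.2) (Icc 0 t₀ ×ˢ Icc 0 L))
    (hvpos : ∀ t ∈ Icc (0:ℝ) t₀, ∀ x ∈ Icc (0:ℝ) L, 0 < v t x)
    (hwcont : ContinuousOn (fun p : ℝ × ℝ => w p.1 p.2) (Icc 0 t₀ ×ˢ Icc 0 L))
    (hwtcont : ContinuousOn (fun p : ℝ × ℝ => wt p.1 p.2) (Icc 0 t₀ ×ˢ Icc 0 L))
    (hwxcont : ContinuousOn (fun p : ℝ × ℝ => wx p.1 p.2) (Icc 0 t₀ ×ˢ Icc 0 L))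
    (hwt : ∀ t ∈ Icc (0:ℝ) t₀, ∀ x ∈ Icc (0:ℝ) L,
        HasDerivWithinAt (fun s => w s x) (wt t x) (Icc 0 t₀) t)
    (hwx : ∀ t ∈ Icc (0:ℝ) t₀, ∀ x ∈ Icc (0:ℝ) L,
        HasDerivWithinAt (fun y => w t y) (wx t x) (Icc 0 L) x)
    (heq : ∀ t ∈ Ioo (0:ℝ) t₀, ∀ x ∈ Ioo (0:ℝ) L, wt t x + v t x * wx t x = 0)
    (hinit : ∀ x ∈ Icc (0:ℝ) L, m ≤ w 0 x ∧ w 0 x ≤ M)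
    (hbdry : ∀ t ∈ Icc (0:ℝ) t₀, m ≤ w t 0 ∧ w t 0 ≤ M) :
    ∀ t ∈ Icc (0:ℝ) t₀, ∀ x ∈ Icc (0:ℝ) L, m ≤ w t x ∧ w t x ≤ M :=
  statement6_general t₀ L ht₀ hL v w wt wx m M hvpos hwcont hwt hwx heq hinit hbdry
end

section
/- Let t₀, L > 0, let v⁰ ∈ C¹([0,t₀] × [0,L]), let Q : [0,t₀] → ℝ be continuous, and let u : [0,t₀] × [0,L] → ℝ be twice continuously differentiable with ∂ₜu + v⁰ ∂ₓu + Q(t) = 0 on [0,t₀] × [0,L]. Set S := ∂ₓu. Then for every (t,x) ∈ [0,t₀] × [0,L]: (1/2)∫₀ˣ (u² + S²)(t,ξ) dξ + (1/2)∫₀ᵗ v⁰(τ,x)(u² + S²)(τ,x) dτ + (1/2)∫₀ᵗ∫₀ˣ ∂ₓv⁰(τ,ξ)(S² − u²)(τ,ξ) dξ dτ + ∫₀ᵗ∫₀ˣ Q(τ) u(τ,ξ) dξ dτ = (1/2)∫₀ˣ (u² + S²)(0,ξ) dξ + (1/2)∫₀ᵗ v⁰(τ,0)(u² + S²)(τ,0)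 dτ. -/
/-!
For `E = u² + S²`, the equation for `u` together with its `x`-derivative
`∂ₜS + v⁰ ∂ₓS + (∂ₓv⁰) S = 0` gives the pointwise conservation law
`∂ₜE + ∂ₓ(v⁰E) + ∂ₓv⁰ (S² - u²) + 2Qu = 0`, and the identity is its integral over
`[0,t] × [0,x]` (Fubini and the fundamental theorem of calculus in each variable).
Differentiating the equation in `x` needs `∂ₓ∂ₜu = ∂ₜ∂ₓu`: both mixed partials have the same
iterated integral over every rectangle with a corner at the origin, namely the second difference
of `u`, and a continuous function is determined by these integrals.
-/

open Set intervalIntegral MeasureTheory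
open Function (uncurry)

section Rectangle

variable {a b c d : ℝ}

theorem uIcc_subset_Icc_of_mem {x : ℝ} (hx : x ∈ Icc c d) : uIcc c x ⊆ Icc c d :=
  uIcc_subset_Icc (left_mem_Icc.2 (hx.1.trans hx.2)) hx

theorem integral_eq_sub_of_hasDerivWithinAt_Icc {f f' : ℝ → ℝ}
    (hf : ∀ y ∈ Icc a b, HasDerivWithinAt f (f' y) (Icc a b) y)
    (hf' : ContinuousOn f' (Icc a b)) {t : ℝ} (ht : t ∈ Icc a b) :
    ∫ y in a..t, f' y = f t - f a := by
  have hsub : Icc a t ⊆ Icc a b := Icc_subset_Icc_right ht.2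
  refine integral_eq_sub_of_hasDeriv_right_of_le ht.1
    (fun y hy => (hf y (hsub hy)).continuousWithinAt.mono hsub) (fun y hy => ?_)
    ((hf'.mono hsub).intervalIntegrable_of_Icc ht.1)
  exact (hf y (hsub (Ioo_subset_Icc_self hy))).mono_of_mem_nhdsWithin
    (Icc_mem_nhdsGT_of_mem ⟨hy.1.le, hy.2.trans_le ht.2⟩)

theorem hasDerivWithinAt_integral_Icc {f : ℝ → ℝ} (hf : ContinuousOn f (Icc a b)) {t : ℝ}
    (ht : t ∈ Icc a b) : HasDerivWithinAt (fun s => ∫ y in a..s, f y) (f t) (Icc a b) t := by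
  have : Fact (t ∈ Icc a b) := ⟨ht⟩
  exact integral_hasDerivWithinAt_right ((hf.mono (uIcc_subset_Icc_of_mem ht)).intervalIntegrable)
    (hf.stronglyMeasurableAtFilter_nhdsWithin measurableSet_Icc t) (hf t ht)

theorem eqOn_of_forall_integral_eq {f g : ℝ → ℝ} (hab : a < b) (hf : ContinuousOn f (Icc a b))
    (hg : ContinuousOn g (Icc a b)) (h : ∀ t ∈ Icc a b, ∫ y in a..t, f y = ∫ y in a..t, g y) :
    EqOn f g (Icc a b) := fun t ht =>
  (uniqueDiffOn_Icc hab t ht).eq_deriv _ (hasDerivWithinAt_integral_Icc hf ht)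
    ((hasDerivWithinAt_integral_Icc hg ht).congr (fun s hs => h s hs) (h t ht))

theorem continuousOn_integral_of_continuousOn_uncurry {g : ℝ → ℝ → ℝ}
    (hg : ContinuousOn (uncurry g) (Icc a b ×ˢ Icc c d)) {x : ℝ} (hx : x ∈ Icc c d) :
    ContinuousOn (fun τ => ∫ ξ in c..x, g τ ξ) (Icc a b) := by
  rcases lt_or_ge b a with hba | hab
  · simp [Icc_eq_empty_of_lt hba]
  have hcd : c ≤ d := hx.1.trans hx.2
  -- clamping to the rectangle gives a globally continuous function, as the parametric lemma needs
  let G : ℝ → ℝ → ℝ := fun τ ξ => g (projIcc a b hab τ) (projIcc c d hcd ξ)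
  have hG : Continuous (uncurry G) :=
    hg.comp_continuous
      (f := fun p : ℝ × ℝ => ((projIcc a b hab p.1 : ℝ), (projIcc c d hcd p.2 : ℝ))) (by fun_prop) fun p => ⟨(projIcc a b hab p.1).2, (projIcc c d hcd p.2).2⟩
  refine (continuous_parametric_intervalIntegral_of_continuous' hG c x).continuousOn.congr
    fun τ hτ => integral_congr fun ξ hξ => ?_
  simp [G, projIcc_of_mem _ hτ, projIcc_of_mem _ (uIcc_subset_Icc_of_mem hx hξ)]

theorem ContinuousOn.integrableOn_uIoc_prod {g : ℝ → ℝ → ℝ}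
    (hg : ContinuousOn (uncurry g) (Icc a b ×ˢ Icc c d)) {t x : ℝ} (ht : t ∈ Icc a b)
    (hx : x ∈ Icc c d) : IntegrableOn (uncurry g) (uIoc a t ×ˢ uIoc c x) :=
  (hg.integrableOn_compact (isCompact_Icc.prod isCompact_Icc)).mono_set <|
    prod_mono (uIoc_subset_uIcc.trans (uIcc_subset_Icc_of_mem ht))
      (uIoc_subset_uIcc.trans (uIcc_subset_Icc_of_mem hx))

theorem eqOn_of_forall_integral_integral_eq {f g : ℝ → ℝ → ℝ} (hab : a < b) (hcd : c < d)
    (hf : ContinuousOn (uncurry f) (Icc a b ×ˢ Icc c d))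
    (hg : ContinuousOn (uncurry g) (Icc a b ×ˢ Icc c d))
    (h : ∀ t ∈ Icc a b, ∀ x ∈ Icc c d,
      ∫ τ in a..t, ∫ ξ in c..x, f τ ξ = ∫ τ in a..t, ∫ ξ in c..x, g τ ξ) :
    ∀ t ∈ Icc a b, ∀ x ∈ Icc c d, f t x = g t x := by
  have inner : ∀ x ∈ Icc c d, ∀ t ∈ Icc a b, ∫ ξ in c..x, f t ξ = ∫ ξ in c..x, g t ξ :=
    fun x hx => eqOn_of_forall_integral_eq hab (continuousOn_integral_of_continuousOn_uncurry hf hx)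
      (continuousOn_integral_of_continuousOn_uncurry hg hx) fun t ht => h t ht x hx
  exact fun t ht => eqOn_of_forall_integral_eq hcd (hf.uncurry_left t ht) (hg.uncurry_left t ht)
    fun x hx => inner x hx t ht

theorem integral_integral_add_of_continuousOn {f g : ℝ → ℝ → ℝ}
    (hf : ContinuousOn (uncurry f) (Icc a b ×ˢ Icc c d))
    (hg : ContinuousOn (uncurry g) (Icc a b ×ˢ Icc c d)) {t x : ℝ} (ht : t ∈ Icc a b)
    (hx : x ∈ Icc c d) :
    ∫ τ in a..t, ∫ ξ in c..x, (f τ ξ + g τ ξ)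
      = (∫ τ in a..t, ∫ ξ in c..x, f τ ξ) + ∫ τ in a..t, ∫ ξ in c..x, g τ ξ := by
  have hsub := uIcc_subset_Icc_of_mem ht
  rw [← integral_add
    ((continuousOn_integral_of_continuousOn_uncurry hf hx).mono hsub).intervalIntegrable
    ((continuousOn_integral_of_continuousOn_uncurry hg hx).mono hsub).intervalIntegrable]
  refine integral_congr fun τ hτ => integral_add ?_ ?_
  · exact ((hf.uncurry_left τ (hsub hτ)).mono (uIcc_subset_Icc_of_mem hx)).intervalIntegrable
  · exact ((hg.uncurry_left τ (hsub hτ)).mono (uIcc_subset_Icc_of_mem hx)).intervalIntegrable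

theorem integral_integral_eq_of_hasDerivWithinAt_fst {E Et : ℝ → ℝ → ℝ}
    (hE : ContinuousOn (uncurry E) (Icc a b ×ˢ Icc c d))
    (hEt : ∀ t ∈ Icc a b, ∀ x ∈ Icc c d,
      HasDerivWithinAt (fun s => E s x) (Et t x) (Icc a b) t)
    (hEtc : ContinuousOn (uncurry Et) (Icc a b ×ˢ Icc c d)) :
    ∀ t ∈ Icc a b, ∀ x ∈ Icc c d,
      ∫ τ in a..t, ∫ ξ in c..x, Et τ ξ = (∫ ξ in c..x, E t ξ) - ∫ ξ in c..x, E a ξ := by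
  intro t ht x hx
  have hsub := uIcc_subset_Icc_of_mem hx
  rw [intervalIntegral_intervalIntegral_swap (hEtc.integrableOn_uIoc_prod ht hx),
    ← integral_sub ((hE.uncurry_left t ht).mono hsub).intervalIntegrable
      ((hE.uncurry_left a (left_mem_Icc.2 (ht.1.trans ht.2))).mono hsub).intervalIntegrable]
  exact integral_congr fun ξ hξ => integral_eq_sub_of_hasDerivWithinAt_Icc
    (fun s hs => hEt s hs ξ (hsub hξ)) (hEtc.uncurry_right ξ (hsub hξ)) ht

theorem integral_integral_eq_of_hasDerivWithinAt_snd {F Fx : ℝ → ℝ → ℝ}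
    (hF : ContinuousOn (uncurry F) (Icc a b ×ˢ Icc c d))
    (hFx : ∀ t ∈ Icc a b, ∀ x ∈ Icc c d,
      HasDerivWithinAt (fun y => F t y) (Fx t x) (Icc c d) x)
    (hFxc : ContinuousOn (uncurry Fx) (Icc a b ×ˢ Icc c d)) :
    ∀ t ∈ Icc a b, ∀ x ∈ Icc c d,
      ∫ τ in a..t, ∫ ξ in c..x, Fx τ ξ = (∫ τ in a..t, F τ x) - ∫ τ in a..t, F τ c := by
  intro t ht x hx
  have hsub := uIcc_subset_Icc_of_mem ht
  rw [← integral_sub ((hF.uncurry_right x hx).mono hsub).intervalIntegrable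
      ((hF.uncurry_right c (left_mem_Icc.2 (hx.1.trans hx.2))).mono hsub).intervalIntegrable]
  exact integral_congr fun τ hτ => integral_eq_sub_of_hasDerivWithinAt_Icc
    (hFx τ (hsub hτ)) (hFxc.uncurry_left τ (hsub hτ)) hx

theorem mixed_partials_eq_s11 {u ut ux utx uxt : ℝ → ℝ → ℝ} (hab : a < b) (hcd : c < d)
    (hut : ∀ t ∈ Icc a b, ∀ x ∈ Icc c d,
      HasDerivWithinAt (fun s => u s x) (ut t x) (Icc a b) t)
    (hux : ∀ t ∈ Icc a b, ∀ x ∈ Icc c d,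
      HasDerivWithinAt (fun y => u t y) (ux t x) (Icc c d) x)
    (hutc : ContinuousOn (uncurry ut) (Icc a b ×ˢ Icc c d))
    (huxc : ContinuousOn (uncurry ux) (Icc a b ×ˢ Icc c d))
    (hutx : ∀ t ∈ Icc a b, ∀ x ∈ Icc c d,
      HasDerivWithinAt (fun y => ut t y) (utx t x) (Icc c d) x)
    (huxt : ∀ t ∈ Icc a b, ∀ x ∈ Icc c d,
      HasDerivWithinAt (fun s => ux s x) (uxt t x) (Icc a b) t)
    (hutxc : ContinuousOn (uncurry utx) (Icc a b ×ˢ Icc c d))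
    (huxtc : ContinuousOn (uncurry uxt) (Icc a b ×ˢ Icc c d)) :
    ∀ t ∈ Icc a b, ∀ x ∈ Icc c d, utx t x = uxt t x := by
  refine eqOn_of_forall_integral_integral_eq hab hcd hutxc huxtc fun t ht x hx => ?_
  have ha : a ∈ Icc a b := left_mem_Icc.2 hab.le
  have hc : c ∈ Icc c d := left_mem_Icc.2 hcd.le
  -- both iterated integrals equal `u t x - u a x - u t c + u a c`
  rw [integral_integral_eq_of_hasDerivWithinAt_snd hutc hutx hutxc t ht x hx,
    integral_integral_eq_of_hasDerivWithinAt_fst huxc huxt huxtc t ht x hx,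
    integral_eq_sub_of_hasDerivWithinAt_Icc (fun s hs => hut s hs x hx)
      (hutc.uncurry_right x hx) ht,
    integral_eq_sub_of_hasDerivWithinAt_Icc (fun s hs => hut s hs c hc)
      (hutc.uncurry_right c hc) ht,
    integral_eq_sub_of_hasDerivWithinAt_Icc (hux t ht) (huxc.uncurry_left t ht) hx,
    integral_eq_sub_of_hasDerivWithinAt_Icc (hux a ha) (huxc.uncurry_left a ha) hx]
  ring

theorem integral_balance_of_conservation_law {E Et F Fx R : ℝ → ℝ → ℝ}
    (hE : ContinuousOn (uncurry E) (Icc a b ×ˢ Icc c d))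
    (hEt : ∀ t ∈ Icc a b, ∀ x ∈ Icc c d,
      HasDerivWithinAt (fun s => E s x) (Et t x) (Icc a b) t)
    (hEtc : ContinuousOn (uncurry Et) (Icc a b ×ˢ Icc c d))
    (hF : ContinuousOn (uncurry F) (Icc a b ×ˢ Icc c d))
    (hFx : ∀ t ∈ Icc a b, ∀ x ∈ Icc c d,
      HasDerivWithinAt (fun y => F t y) (Fx t x) (Icc c d) x)
    (hFxc : ContinuousOn (uncurry Fx) (Icc a b ×ˢ Icc c d))
    (hR : ∀ t ∈ Icc a b, ∀ x ∈ Icc c d, Et t x + Fx t x + R t x = 0) :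
    ∀ t ∈ Icc a b, ∀ x ∈ Icc c d,
      (∫ ξ in c..x, E t ξ) + (∫ τ in a..t, F τ x) + ∫ τ in a..t, ∫ ξ in c..x, R τ ξ
        = (∫ ξ in c..x, E a ξ) + ∫ τ in a..t, F τ c := by
  intro t ht x hx
  have hRint : ∫ τ in a..t, ∫ ξ in c..x, R τ ξ
      = -∫ τ in a..t, ∫ ξ in c..x, (Et τ ξ + Fx τ ξ) := by
    rw [← intervalIntegral.integral_neg]
    refine integral_congr fun τ hτ => ?_
    rw [← intervalIntegral.integral_neg]
    refine integral_congr fun ξ hξ => ?_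
    linarith [hR τ (uIcc_subset_Icc_of_mem ht hτ) ξ (uIcc_subset_Icc_of_mem hx hξ)]
  rw [hRint, integral_integral_add_of_continuousOn hEtc hFxc ht hx,
    integral_integral_eq_of_hasDerivWithinAt_fst hE hEt hEtc t ht x hx,
    integral_integral_eq_of_hasDerivWithinAt_snd hF hFx hFxc t ht x hx]
  ring

end Rectangle

theorem statement11_general
    (t₀ L : ℝ) (ht₀ : 0 < t₀) (hL : 0 < L)
    (Q : ℝ → ℝ) (v0 v0x u ut ux utx uxt uxx : ℝ → ℝ → ℝ)
    (hQcont : ContinuousOn Q (Icc 0 t₀))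
    -- `v⁰ ∈ C¹([0,t₀] × [0,L])`
    (hv0cont : ContinuousOn (fun p : ℝ × ℝ => v0 p.1 p.2) (Icc 0 t₀ ×ˢ Icc 0 L))
    (hv0x : ∀ t ∈ Icc (0:ℝ) t₀, ∀ x ∈ Icc (0:ℝ) L,
        HasDerivWithinAt (fun y => v0 t y) (v0x t x) (Icc 0 L) x)
    (hv0xcont : ContinuousOn (fun p : ℝ × ℝ => v0x p.1 p.2) (Icc 0 t₀ ×ˢ Icc 0 L))
    -- `u` twice continuously differentiable on `[0,t₀] × [0,L]`
    (hucont : ContinuousOn (fun p : ℝ × ℝ => u p.1 p.2) (Icc 0 t₀ ×ˢ Icc 0 L))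
    (hut : ∀ t ∈ Icc (0:ℝ) t₀, ∀ x ∈ Icc (0:ℝ) L,
        HasDerivWithinAt (fun s => u s x) (ut t x) (Icc 0 t₀) t)
    (hux : ∀ t ∈ Icc (0:ℝ) t₀, ∀ x ∈ Icc (0:ℝ) L,
        HasDerivWithinAt (fun y => u t y) (ux t x) (Icc 0 L) x)
    (hutcont : ContinuousOn (fun p : ℝ × ℝ => ut p.1 p.2) (Icc 0 t₀ ×ˢ Icc 0 L))
    (huxcont : ContinuousOn (fun p : ℝ × ℝ => ux p.1 p.2) (Icc 0 t₀ ×ˢ Icc 0 L))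
    (hutx : ∀ t ∈ Icc (0:ℝ) t₀, ∀ x ∈ Icc (0:ℝ) L,
        HasDerivWithinAt (fun y => ut t y) (utx t x) (Icc 0 L) x)
    (huxt : ∀ t ∈ Icc (0:ℝ) t₀, ∀ x ∈ Icc (0:ℝ) L,
        HasDerivWithinAt (fun s => ux s x) (uxt t x) (Icc 0 t₀) t)
    (huxx : ∀ t ∈ Icc (0:ℝ) t₀, ∀ x ∈ Icc (0:ℝ) L,
        HasDerivWithinAt (fun y => ux t y) (uxx t x) (Icc 0 L) x)
    (hutxcont : ContinuousOn (fun p : ℝ × ℝ => utx p.1 p.2) (Icc 0 t₀ ×ˢ Icc 0 L))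
    (huxtcont : ContinuousOn (fun p : ℝ × ℝ => uxt p.1 p.2) (Icc 0 t₀ ×ˢ Icc 0 L))
    (huxxcont : ContinuousOn (fun p : ℝ × ℝ => uxx p.1 p.2) (Icc 0 t₀ ×ˢ Icc 0 L))
    -- the equation `∂ₜu + v⁰ ∂ₓu + Q(t) = 0` on `[0,t₀] × [0,L]`
    (heq : ∀ t ∈ Icc (0:ℝ) t₀, ∀ x ∈ Icc (0:ℝ) L,
        ut t x + v0 t x * ux t x + Q t = 0) :
    ∀ t ∈ Icc (0:ℝ) t₀, ∀ x ∈ Icc (0:ℝ) L,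
      (1/2) * (∫ ξ in (0:ℝ)..x, (u t ξ ^ 2 + ux t ξ ^ 2))
        + (1/2) * (∫ τ in (0:ℝ)..t, v0 τ x * (u τ x ^ 2 + ux τ x ^ 2))
        + (1/2) * (∫ τ in (0:ℝ)..t, ∫ ξ in (0:ℝ)..x,
            v0x τ ξ * (ux τ ξ ^ 2 - u τ ξ ^ 2))
        + (∫ τ in (0:ℝ)..t, ∫ ξ in (0:ℝ)..x, Q τ * u τ ξ)
      = (1/2) * (∫ ξ in (0:ℝ)..x, (u 0 ξ ^ 2 + ux 0 ξ ^ 2))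
        + (1/2) * (∫ τ in (0:ℝ)..t, v0 τ 0 * (u τ 0 ^ 2 + ux τ 0 ^ 2)) := by
  have hSeq : ∀ t ∈ Icc (0:ℝ) t₀, ∀ x ∈ Icc (0:ℝ) L,
      uxt t x + v0x t x * ux t x + v0 t x * uxx t x = 0 := by
    intro t ht x hx
    have hutx' : HasDerivWithinAt (fun y => ut t y)
        (-(v0x t x * ux t x + v0 t x * uxx t x)) (Icc 0 L) x :=
      (((hv0x t ht x hx).fun_mul (huxx t ht x hx)).add_const (Q t)).fun_neg.congr
        (fun y hy => by linarith [heq t ht y hy]) (by linarith [heq t ht x hx])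
    rw [← mixed_partials_eq_s11 ht₀ hL hut hux hutcont huxcont hutx huxt hutxcont huxtcont t ht x hx,
      (uniqueDiffOn_Icc hL x hx).eq_deriv _ (hutx t ht x hx) hutx']
    ring
  have hQc : ContinuousOn (fun p : ℝ × ℝ => Q p.1) (Icc 0 t₀ ×ˢ Icc 0 L) :=
    hQcont.comp continuous_fst.continuousOn fun p hp => hp.1
  have hbalance := integral_balance_of_conservation_law
    (E := fun t x => u t x ^ 2 + ux t x ^ 2)
    (Et := fun t x => 2 * (u t x * ut t x + ux t x * uxt t x))
    (F := fun t x => v0 t x * (u t x ^ 2 + ux t x ^ 2))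
    (Fx := fun t x => v0x t x * (u t x ^ 2 + ux t x ^ 2)
      + 2 * v0 t x * (u t x * ux t x + ux t x * uxx t x))
    (R := fun t x => v0x t x * (ux t x ^ 2 - u t x ^ 2) + 2 * (Q t * u t x))
    (by fun_prop)
    (fun t ht x hx => (((hut t ht x hx).fun_pow 2).fun_add
      ((huxt t ht x hx).fun_pow 2)).congr_deriv (by ring))
    (by fun_prop) (by fun_prop)
    (fun t ht x hx => ((hv0x t ht x hx).fun_mul (((hux t ht x hx).fun_pow 2).fun_add
      ((huxx t ht x hx).fun_pow 2))).congr_deriv (by ring))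
    (by fun_prop)
    (fun t ht x hx => by
      linear_combination 2 * u t x * heq t ht x hx + 2 * ux t x * hSeq t ht x hx)
  intro t ht x hx
  specialize hbalance t ht x hx
  rw [integral_integral_add_of_continuousOn (by fun_prop)
    (continuousOn_const.fun_mul (hQc.fun_mul hucont)) ht hx] at hbalance
  simp only [intervalIntegral.integral_const_mul] at hbalance ⊢
  linarith

/-- Energy identity for `∂ₜu + v⁰ ∂ₓu + Q(t) = 0` with
`v⁰ ∈ C¹([0,t₀] × [0,L])` (partials `v0t`, `v0x`), `Q` continuous, and `u` twice
continuously differentiable (first partials `ut`, `ux`, second partials `utt`, `utx`,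
`uxt`, `uxx`, all continuous).  Writing `S = ∂ₓu = ux`, for every `(t,x)`:
`½∫₀ˣ(u²+S²)(t,ξ)dξ + ½∫₀ᵗ v⁰(τ,x)(u²+S²)(τ,x)dτ
 + ½∫₀ᵗ∫₀ˣ ∂ₓv⁰ (S²−u²) dξdτ + ∫₀ᵗ∫₀ˣ Q u dξdτ
 = ½∫₀ˣ(u²+S²)(0,ξ)dξ + ½∫₀ᵗ v⁰(τ,0)(u²+S²)(τ,0)dτ`. -/
theorem statement11
    (t₀ L : ℝ) (ht₀ : 0 < t₀) (hL : 0 < L)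
    (Q : ℝ → ℝ) (v0 v0t v0x u ut ux utt utx uxt uxx : ℝ → ℝ → ℝ)
    (hQcont : ContinuousOn Q (Icc 0 t₀))
    -- `v⁰ ∈ C¹([0,t₀] × [0,L])`
    (hv0cont : ContinuousOn (fun p : ℝ × ℝ => v0 p.1 p.2) (Icc 0 t₀ ×ˢ Icc 0 L))
    (hv0t : ∀ t ∈ Icc (0:ℝ) t₀, ∀ x ∈ Icc (0:ℝ) L,
        HasDerivWithinAt (fun s => v0 s x) (v0t t x) (Icc 0 t₀) t)
    (hv0x : ∀ t ∈ Icc (0:ℝ) t₀, ∀ x ∈ Icc (0:ℝ) L,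
        HasDerivWithinAt (fun y => v0 t y) (v0x t x) (Icc 0 L) x)
    (hv0tcont : ContinuousOn (fun p : ℝ × ℝ => v0t p.1 p.2) (Icc 0 t₀ ×ˢ Icc 0 L))
    (hv0xcont : ContinuousOn (fun p : ℝ × ℝ => v0x p.1 p.2) (Icc 0 t₀ ×ˢ Icc 0 L))
    -- `u` twice continuously differentiable on `[0,t₀] × [0,L]`
    (hucont : ContinuousOn (fun p : ℝ × ℝ => u p.1 p.2) (Icc 0 t₀ ×ˢ Icc 0 L))
    (hut : ∀ t ∈ Icc (0:ℝ) t₀, ∀ x ∈ Icc (0:ℝ) L,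
        HasDerivWithinAt (fun s => u s x) (ut t x) (Icc 0 t₀) t)
    (hux : ∀ t ∈ Icc (0:ℝ) t₀, ∀ x ∈ Icc (0:ℝ) L,
        HasDerivWithinAt (fun y => u t y) (ux t x) (Icc 0 L) x)
    (hutcont : ContinuousOn (fun p : ℝ × ℝ => ut p.1 p.2) (Icc 0 t₀ ×ˢ Icc 0 L))
    (huxcont : ContinuousOn (fun p : ℝ × ℝ => ux p.1 p.2) (Icc 0 t₀ ×ˢ Icc 0 L))
    (hutt : ∀ t ∈ Icc (0:ℝ) t₀, ∀ x ∈ Icc (0:ℝ) L,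
        HasDerivWithinAt (fun s => ut s x) (utt t x) (Icc 0 t₀) t)
    (hutx : ∀ t ∈ Icc (0:ℝ) t₀, ∀ x ∈ Icc (0:ℝ) L,
        HasDerivWithinAt (fun y => ut t y) (utx t x) (Icc 0 L) x)
    (huxt : ∀ t ∈ Icc (0:ℝ) t₀, ∀ x ∈ Icc (0:ℝ) L,
        HasDerivWithinAt (fun s => ux s x) (uxt t x) (Icc 0 t₀) t)
    (huxx : ∀ t ∈ Icc (0:ℝ) t₀, ∀ x ∈ Icc (0:ℝ) L,
        HasDerivWithinAt (fun y => ux t y) (uxx t x) (Icc 0 L) x)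
    (huttcont : ContinuousOn (fun p : ℝ × ℝ => utt p.1 p.2) (Icc 0 t₀ ×ˢ Icc 0 L))
    (hutxcont : ContinuousOn (fun p : ℝ × ℝ => utx p.1 p.2) (Icc 0 t₀ ×ˢ Icc 0 L))
    (huxtcont : ContinuousOn (fun p : ℝ × ℝ => uxt p.1 p.2) (Icc 0 t₀ ×ˢ Icc 0 L))
    (huxxcont : ContinuousOn (fun p : ℝ × ℝ => uxx p.1 p.2) (Icc 0 t₀ ×ˢ Icc 0 L))
    -- the equation `∂ₜu + v⁰ ∂ₓu + Q(t) = 0` on `[0,t₀] × [0,L]`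
    (heq : ∀ t ∈ Icc (0:ℝ) t₀, ∀ x ∈ Icc (0:ℝ) L,
        ut t x + v0 t x * ux t x + Q t = 0) :
    ∀ t ∈ Icc (0:ℝ) t₀, ∀ x ∈ Icc (0:ℝ) L,
      (1/2) * (∫ ξ in (0:ℝ)..x, (u t ξ ^ 2 + ux t ξ ^ 2))
        + (1/2) * (∫ τ in (0:ℝ)..t, v0 τ x * (u τ x ^ 2 + ux τ x ^ 2))
        + (1/2) * (∫ τ in (0:ℝ)..t, ∫ ξ in (0:ℝ)..x,
            v0x τ ξ * (ux τ ξ ^ 2 - u τ ξ ^ 2))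
        + (∫ τ in (0:ℝ)..t, ∫ ξ in (0:ℝ)..x, Q τ * u τ ξ)
      = (1/2) * (∫ ξ in (0:ℝ)..x, (u 0 ξ ^ 2 + ux 0 ξ ^ 2))
        + (1/2) * (∫ τ in (0:ℝ)..t, v0 τ 0 * (u τ 0 ^ 2 + ux τ 0 ^ 2)) :=
  statement11_general t₀ L ht₀ hL Q v0 v0x u ut ux utx uxt uxx hQcont hv0cont hv0x hv0xcont hucont
    hut hux hutcont huxcont hutx huxt huxx hutxcont huxtcont huxxcont heq
end

section
/- Let t₀, L > 0, let v : [0,t₀] × [0,L] → ℝ be continuous with v(t,x) > 0 everywhere, let F : [0,t₀] × [0,L] → ℝ be continuous, and let y ∈ C¹([0,t₀] × [0,L]) satisfy ∂ₜy + v ∂ₓy + F y = 0 on (0,t₀) × (0,L). Let M ≥ 0 be such that |y(0,x)| ≤ M for all x ∈ [0,L] and |y(t,0)| ≤ M for all t ∈ [0,t₀]. Then |y(t,x)| ≤ M · exp(∫₀^{t₀} max_{ξ∈[0,L]} |F(τ,ξ)| dτ) for all (t,x) ∈ [0,t₀] × [0,L]. -/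
/-!
For `ε > 0` the barrier `B(t) = (M + ε) exp(ε t + ∫₀ᵗ G)`, where `G(t) = max_ξ |F(t, ξ)|`,
satisfies `B' + F B > 0`. If `y` reached `B`, take the first time `τ` at which it does, at a
point `ξ`: then `y(·, ξ) - B` is maximal on `[0, τ]` at `τ` and `y(τ, ·)` is maximal on `[0, ξ]`
at `ξ`, so `∂ₜy ≥ B'` and `∂ₓy ≥ 0` there, and the equation with `v ≥ 0` gives `B' + F B ≤ 0`.
The data keep `(τ, ξ)` off `{t = 0} ∪ {x = 0}`, so the equation is only needed where `t, x > 0`;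
this lets us work on the rectangles `[0, t] × [0, x]` with `t < t₀`, `x < L` and reach the far
sides by continuity. Applying this to `±y` and letting `ε → 0` gives the bound.
-/

open Set intervalIntegral Filter Topology

theorem IsMaxOn.nonneg_of_hasDerivWithinAt_Icc_right {f : ℝ → ℝ} {f' a b : ℝ} (hab : a < b)
    (hmax : IsMaxOn f (Icc a b) b) (hf : HasDerivWithinAt f f' (Icc a b) b) : 0 ≤ f' := by
  have hdir : a - b ∈ posTangentConeAt (Icc a b) b :=
    sub_mem_posTangentConeAt_of_segment_subset (by rw [segment_symm, segment_eq_Icc hab.le])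
  have hnonpos := hmax.localize.hasFDerivWithinAt_nonpos hf.hasFDerivWithinAt hdir
  simp only [ContinuousLinearMap.toSpanSingleton_apply, smul_eq_mul] at hnonpos
  nlinarith

theorem continuousOn_sSup_image_Icc {f : ℝ → ℝ → ℝ} {a b c d : ℝ} (hab : a ≤ b) (hcd : c ≤ d)
    (hf : ContinuousOn (fun p : ℝ × ℝ => f p.1 p.2) (Icc a b ×ˢ Icc c d)) :
    ContinuousOn (fun t => sSup (f t '' Icc c d)) (Icc a b) := by
  have hext : Continuous fun t =>
      sSup ((fun x => f (projIcc a b hab t) (projIcc c d hcd x)) '' Icc c d) :=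
    isCompact_Icc.continuous_sSup <| hf.comp_continuous
      (f := fun p : ℝ × ℝ => ((projIcc a b hab p.1 : ℝ), (projIcc c d hcd p.2 : ℝ))) (by fun_prop)
      fun p => mk_mem_prod (projIcc a b hab p.1).2 (projIcc c d hcd p.2).2
  refine hext.continuousOn.congr fun t ht => ?_
  simp only [projIcc_of_mem hab ht]
  exact congrArg sSup (image_congr fun x hx => by rw [projIcc_of_mem hcd hx])

section Transport

variable {T X : ℝ} {v F y yt yx : ℝ → ℝ → ℝ}

theorem lt_of_transport_strict_supersolution {B B' : ℝ → ℝ}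
    (hy : ContinuousOn (fun p : ℝ × ℝ => y p.1 p.2) (Icc 0 T ×ˢ Icc 0 X))
    (hyt : ∀ t ∈ Icc 0 T, ∀ x ∈ Icc 0 X, HasDerivWithinAt (y · x) (yt t x) (Icc 0 T) t)
    (hyx : ∀ t ∈ Icc 0 T, ∀ x ∈ Icc 0 X, HasDerivWithinAt (y t ·) (yx t x) (Icc 0 X) x)
    (hB : ∀ t ∈ Icc 0 T, HasDerivWithinAt B (B' t) (Icc 0 T) t)
    (hv : ∀ t ∈ Ioc 0 T, ∀ x ∈ Ioc 0 X, 0 ≤ v t x)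
    (heq : ∀ t ∈ Ioc 0 T, ∀ x ∈ Ioc 0 X, yt t x + v t x * yx t x + F t x * y t x = 0)
    (hsuper : ∀ t ∈ Ioc 0 T, ∀ x ∈ Ioc 0 X, 0 < B' t + F t x * B t)
    (hinit : ∀ x ∈ Icc 0 X, y 0 x < B 0) (hbdry : ∀ t ∈ Icc 0 T, y t 0 < B t) :
    ∀ t ∈ Icc 0 T, ∀ x ∈ Icc 0 X, y t x < B t := by
  by_contra! hcross
  obtain ⟨t₁, ht₁, x₁, hx₁, hle₁⟩ := hcross
  have hBcont : ContinuousOn B (Icc 0 T) := fun t ht => (hB t ht).continuousWithinAt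
  have hP : IsCompact ((Icc 0 T ×ˢ Icc 0 X) ∩ (fun p : ℝ × ℝ => y p.1 p.2 - B p.1) ⁻¹' Ici 0) :=
    (isCompact_Icc.prod isCompact_Icc).of_isClosed_subset
      ((hy.sub (hBcont.comp continuousOn_fst fun _ hp => hp.1)).preimage_isClosed_of_isClosed
        (isClosed_Icc.prod isClosed_Icc) isClosed_Ici) inter_subset_left
  obtain ⟨⟨τ, ξ⟩, ⟨⟨hτ, hξ⟩, hτξ⟩, hfirst⟩ := hP.exists_isMinOn
    ⟨(t₁, x₁), ⟨mk_mem_prod ht₁ hx₁, sub_nonneg.2 hle₁⟩⟩ continuous_fst.continuousOn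
  replace hτξ : B τ ≤ y τ ξ := sub_nonneg.1 hτξ
  have hbefore : ∀ s ∈ Icc 0 T, s < τ → ∀ x ∈ Icc 0 X, y s x < B s := fun s hs hsτ x hx =>
    not_le.1 fun h => (hfirst ⟨mk_mem_prod hs hx, sub_nonneg.2 h⟩).not_gt hsτ
  have hτ0 : 0 < τ := hτ.1.lt_of_ne <| by rintro rfl; exact (hinit ξ hξ).not_ge hτξ
  have hξ0 : 0 < ξ := hξ.1.lt_of_ne <| by rintro rfl; exact (hbdry τ hτ).not_ge hτξ
  have hsubτ : Icc 0 τ ⊆ Icc 0 T := Icc_subset_Icc le_rfl hτ.2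
  have hat : ∀ x ∈ Icc 0 X, y τ x ≤ B τ := fun x hx =>
    ContinuousWithinAt.closure_le (by rw [closure_Ico hτ0.ne]; exact ⟨hτ0.le, le_rfl⟩)
      ((hyt τ hτ x hx).continuousWithinAt.mono (Ico_subset_Icc_self.trans hsubτ))
      ((hB τ hτ).continuousWithinAt.mono (Ico_subset_Icc_self.trans hsubτ))
      fun s hs => (hbefore s (hsubτ (Ico_subset_Icc_self hs)) hs.2 x hx).le
  have htouch : y τ ξ = B τ := le_antisymm (hat ξ hξ) hτξ
  have hdt : 0 ≤ yt τ ξ - B' τ := by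
    refine IsMaxOn.nonneg_of_hasDerivWithinAt_Icc_right hτ0 (fun s hs => ?_)
      (((hyt τ hτ ξ hξ).sub (hB τ hτ)).mono hsubτ)
    change y s ξ - B s ≤ y τ ξ - B τ
    rcases hs.2.lt_or_eq with hsτ | rfl
    · linarith [hbefore s (hsubτ hs) hsτ ξ hξ]
    · exact le_rfl
  have hdx : 0 ≤ yx τ ξ :=
    IsMaxOn.nonneg_of_hasDerivWithinAt_Icc_right hξ0
      (fun x hx => htouch ▸ hat x (Icc_subset_Icc le_rfl hξ.2 hx))
      ((hyx τ hτ ξ hξ).mono (Icc_subset_Icc le_rfl hξ.2))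
  have hτ' : τ ∈ Ioc 0 T := ⟨hτ0, hτ.2⟩
  have hξ' : ξ ∈ Ioc 0 X := ⟨hξ0, hξ.2⟩
  have hpde := heq τ hτ' ξ hξ'
  rw [htouch] at hpde
  nlinarith [mul_nonneg (hv τ hτ' ξ hξ') hdx, hsuper τ hτ' ξ hξ']

theorem abs_lt_of_transport_strict_supersolution {B B' : ℝ → ℝ}
    (hy : ContinuousOn (fun p : ℝ × ℝ => y p.1 p.2) (Icc 0 T ×ˢ Icc 0 X))
    (hyt : ∀ t ∈ Icc 0 T, ∀ x ∈ Icc 0 X, HasDerivWithinAt (y · x) (yt t x) (Icc 0 T) t)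
    (hyx : ∀ t ∈ Icc 0 T, ∀ x ∈ Icc 0 X, HasDerivWithinAt (y t ·) (yx t x) (Icc 0 X) x)
    (hB : ∀ t ∈ Icc 0 T, HasDerivWithinAt B (B' t) (Icc 0 T) t)
    (hv : ∀ t ∈ Ioc 0 T, ∀ x ∈ Ioc 0 X, 0 ≤ v t x)
    (heq : ∀ t ∈ Ioc 0 T, ∀ x ∈ Ioc 0 X, yt t x + v t x * yx t x + F t x * y t x = 0)
    (hsuper : ∀ t ∈ Ioc 0 T, ∀ x ∈ Ioc 0 X, 0 < B' t + F t x * B t)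
    (hinit : ∀ x ∈ Icc 0 X, |y 0 x| < B 0) (hbdry : ∀ t ∈ Icc 0 T, |y t 0| < B t) :
    ∀ t ∈ Icc 0 T, ∀ x ∈ Icc 0 X, |y t x| < B t := by
  intro t ht x hx
  refine abs_lt.2 ⟨neg_lt.1 ?_, ?_⟩
  · exact lt_of_transport_strict_supersolution (y := fun t x => -y t x)
      (yt := fun t x => -yt t x) (yx := fun t x => -yx t x) hy.neg
      (fun t ht x hx => (hyt t ht x hx).neg) (fun t ht x hx => (hyx t ht x hx).neg) hB hv
      (fun t ht x hx => by linear_combination -heq t ht x hx) hsuper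
      (fun x hx => (neg_le_abs _).trans_lt (hinit x hx))
      (fun t ht => (neg_le_abs _).trans_lt (hbdry t ht)) t ht x hx
  · exact lt_of_transport_strict_supersolution hy hyt hyx hB hv heq hsuper
      (fun x hx => (le_abs_self _).trans_lt (hinit x hx))
      (fun t ht => (le_abs_self _).trans_lt (hbdry t ht)) t ht x hx

theorem abs_le_mul_exp_integral_of_transport_Ioc {M : ℝ} {G : ℝ → ℝ} (hM : 0 ≤ M)
    (hG : Continuous G) (hFG : ∀ t ∈ Icc 0 T, ∀ x ∈ Icc 0 X, |F t x| ≤ G t)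
    (hy : ContinuousOn (fun p : ℝ × ℝ => y p.1 p.2) (Icc 0 T ×ˢ Icc 0 X))
    (hyt : ∀ t ∈ Icc 0 T, ∀ x ∈ Icc 0 X, HasDerivWithinAt (y · x) (yt t x) (Icc 0 T) t)
    (hyx : ∀ t ∈ Icc 0 T, ∀ x ∈ Icc 0 X, HasDerivWithinAt (y t ·) (yx t x) (Icc 0 X) x)
    (hv : ∀ t ∈ Ioc 0 T, ∀ x ∈ Ioc 0 X, 0 ≤ v t x)
    (heq : ∀ t ∈ Ioc 0 T, ∀ x ∈ Ioc 0 X, yt t x + v t x * yx t x + F t x * y t x = 0)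
    (hinit : ∀ x ∈ Icc 0 X, |y 0 x| ≤ M) (hbdry : ∀ t ∈ Icc 0 T, |y t 0| ≤ M) :
    ∀ t ∈ Icc 0 T, ∀ x ∈ Icc 0 X, |y t x| ≤ M * Real.exp (∫ τ in 0..t, G τ) := by
  intro t ht x hx
  have hG0 : ∀ s ∈ Icc 0 T, 0 ≤ G s := fun s hs =>
    (abs_nonneg _).trans (hFG s hs 0 (left_mem_Icc.2 (hx.1.trans hx.2)))
  have hbarrier : ∀ ε > 0, |y t x| < (M + ε) * Real.exp (ε * t + ∫ τ in 0..t, G τ) := by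
    intro ε hε
    set B : ℝ → ℝ := fun s => (M + ε) * Real.exp (ε * s + ∫ τ in 0..s, G τ)
    have hB (s : ℝ) : HasDerivAt B ((ε + G s) * B s) s := by
      have hexp : HasDerivAt (fun s => ε * s + ∫ τ in 0..s, G τ) (ε + G s) s := by
        simpa using ((hasDerivAt_id s).const_mul ε).fun_add
          (hG.integral_hasStrictDerivAt 0 s).hasDerivAt
      exact (hexp.exp.const_mul (M + ε)).congr_deriv (by ring)
    have hBpos (s : ℝ) : 0 < B s := by positivity
    refine abs_lt_of_transport_strict_supersolution hy hyt hyx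
      (fun s _ => (hB s).hasDerivWithinAt) hv heq (fun s hs ξ hξ => ?_) (fun ξ hξ => ?_)
      (fun s hs => ?_) t ht x hx
    · have := (neg_le_abs (F s ξ)).trans (hFG s (Ioc_subset_Icc_self hs) ξ (Ioc_subset_Icc_self hξ))
      rw [← add_mul]
      exact mul_pos (by linarith) (hBpos s)
    · simp only [B, mul_zero, integral_same, add_zero, Real.exp_zero, mul_one]
      linarith [hinit ξ hξ]
    · have hexp : 0 ≤ ε * s + ∫ τ in 0..s, G τ := add_nonneg (by nlinarith [hs.1])
        (integral_nonneg hs.1 fun τ hτ => hG0 τ ⟨hτ.1, hτ.2.trans hs.2⟩)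
      calc |y s 0| < M + ε := by linarith [hbdry s hs]
        _ ≤ B s := le_mul_of_one_le_right (by linarith) (Real.one_le_exp hexp)
  have hlim : Tendsto (fun ε => (M + ε) * Real.exp (ε * t + ∫ τ in 0..t, G τ)) (𝓝[>] 0)
      (𝓝 (M * Real.exp (∫ τ in 0..t, G τ))) := by
    have hcont : Continuous fun ε => (M + ε) * Real.exp (ε * t + ∫ τ in 0..t, G τ) := by
      fun_prop
    simpa using (hcont.tendsto 0).mono_left nhdsWithin_le_nhds
  exact ge_of_tendsto hlim (eventually_nhdsWithin_of_forall fun ε hε => (hbarrier ε hε).le)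

theorem abs_le_mul_exp_integral_of_transport_Ioo {M : ℝ} {G : ℝ → ℝ} (hT : 0 < T) (hX : 0 < X)
    (hM : 0 ≤ M) (hG : Continuous G) (hFG : ∀ t ∈ Icc 0 T, ∀ x ∈ Icc 0 X, |F t x| ≤ G t)
    (hy : ContinuousOn (fun p : ℝ × ℝ => y p.1 p.2) (Icc 0 T ×ˢ Icc 0 X))
    (hyt : ∀ t ∈ Icc 0 T, ∀ x ∈ Icc 0 X, HasDerivWithinAt (y · x) (yt t x) (Icc 0 T) t)
    (hyx : ∀ t ∈ Icc 0 T, ∀ x ∈ Icc 0 X, HasDerivWithinAt (y t ·) (yx t x) (Icc 0 X) x)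
    (hv : ∀ t ∈ Ioo 0 T, ∀ x ∈ Ioo 0 X, 0 ≤ v t x)
    (heq : ∀ t ∈ Ioo 0 T, ∀ x ∈ Ioo 0 X, yt t x + v t x * yx t x + F t x * y t x = 0)
    (hinit : ∀ x ∈ Icc 0 X, |y 0 x| ≤ M) (hbdry : ∀ t ∈ Icc 0 T, |y t 0| ≤ M) :
    ∀ t ∈ Icc 0 T, ∀ x ∈ Icc 0 X, |y t x| ≤ M * Real.exp (∫ τ in 0..T, G τ) := by
  have hG0 : ∀ τ ∈ Icc 0 T, 0 ≤ G τ := fun τ hτ =>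
    (abs_nonneg _).trans (hFG τ hτ 0 (left_mem_Icc.2 hX.le))
  have hopen : ∀ t ∈ Ico 0 T, ∀ x ∈ Ico 0 X, |y t x| ≤ M * Real.exp (∫ τ in 0..T, G τ) := by
    intro t ht x hx
    have hsubt : Icc 0 t ⊆ Icc 0 T := Icc_subset_Icc le_rfl ht.2.le
    have hsubx : Icc 0 x ⊆ Icc 0 X := Icc_subset_Icc le_rfl hx.2.le
    have hsubt' : Ioc 0 t ⊆ Ioo 0 T := fun s hs => ⟨hs.1, hs.2.trans_lt ht.2⟩
    have hsubx' : Ioc 0 x ⊆ Ioo 0 X := fun ξ hξ => ⟨hξ.1, hξ.2.trans_lt hx.2⟩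
    calc |y t x| ≤ M * Real.exp (∫ τ in 0..t, G τ) :=
          abs_le_mul_exp_integral_of_transport_Ioc hM hG
            (fun s hs ξ hξ => hFG s (hsubt hs) ξ (hsubx hξ)) (hy.mono (prod_mono hsubt hsubx))
            (fun s hs ξ hξ => (hyt s (hsubt hs) ξ (hsubx hξ)).mono hsubt)
            (fun s hs ξ hξ => (hyx s (hsubt hs) ξ (hsubx hξ)).mono hsubx)
            (fun s hs ξ hξ => hv s (hsubt' hs) ξ (hsubx' hξ))
            (fun s hs ξ hξ => heq s (hsubt' hs) ξ (hsubx' hξ))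
            (fun ξ hξ => hinit ξ (hsubx hξ)) (fun s hs => hbdry s (hsubt hs))
            t (right_mem_Icc.2 ht.1) x (right_mem_Icc.2 hx.1)
      _ ≤ M * Real.exp (∫ τ in 0..T, G τ) := by
          gcongr
          exact integral_mono_interval le_rfl ht.1 ht.2.le
            (MeasureTheory.ae_restrict_of_forall_mem measurableSet_Ioc fun τ hτ =>
              hG0 τ (Ioc_subset_Icc_self hτ))
            (hG.intervalIntegrable _ _)
  intro t ht x hx
  exact ContinuousWithinAt.closure_le (f := fun p : ℝ × ℝ => |y p.1 p.2|) (x := (t, x))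
    (by rw [closure_prod_eq, closure_Ico hT.ne, closure_Ico hX.ne]; exact ⟨ht, hx⟩)
    ((hy.abs _ ⟨ht, hx⟩).mono (prod_mono Ico_subset_Icc_self Ico_subset_Icc_self))
    continuousWithinAt_const fun p hp => hopen p.1 hp.1 p.2 hp.2

end Transport

theorem statement12_general
    (t₀ L : ℝ) (ht₀ : 0 < t₀) (hL : 0 < L)
    (v F y yt yx : ℝ → ℝ → ℝ) (M : ℝ) (hM : 0 ≤ M)
    (hvpos : ∀ t ∈ Icc (0:ℝ) t₀, ∀ x ∈ Icc (0:ℝ) L, 0 < v t x)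
    (hFcont : ContinuousOn (fun p : ℝ × ℝ => F p.1 p.2) (Icc 0 t₀ ×ˢ Icc 0 L))
    (hycont : ContinuousOn (fun p : ℝ × ℝ => y p.1 p.2) (Icc 0 t₀ ×ˢ Icc 0 L))
    (hyt : ∀ t ∈ Icc (0:ℝ) t₀, ∀ x ∈ Icc (0:ℝ) L,
        HasDerivWithinAt (fun s => y s x) (yt t x) (Icc 0 t₀) t)
    (hyx : ∀ t ∈ Icc (0:ℝ) t₀, ∀ x ∈ Icc (0:ℝ) L,
        HasDerivWithinAt (fun ξ => y t ξ) (yx t x) (Icc 0 L) x)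
    (heq : ∀ t ∈ Ioo (0:ℝ) t₀, ∀ x ∈ Ioo (0:ℝ) L,
        yt t x + v t x * yx t x + F t x * y t x = 0)
    (hinit : ∀ x ∈ Icc (0:ℝ) L, |y 0 x| ≤ M)
    (hbdry : ∀ t ∈ Icc (0:ℝ) t₀, |y t 0| ≤ M) :
    ∀ t ∈ Icc (0:ℝ) t₀, ∀ x ∈ Icc (0:ℝ) L,
      |y t x| ≤ M * Real.exp (∫ τ in (0:ℝ)..t₀, sSup ((fun ξ => |F τ ξ|) '' Icc (0:ℝ) L)) := by
  set G : ℝ → ℝ := fun τ => sSup ((fun ξ => |F τ ξ|) '' Icc (0:ℝ) L)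
  have hGcont : ContinuousOn G (Icc 0 t₀) := continuousOn_sSup_image_Icc ht₀.le hL.le hFcont.abs
  have hFG : ∀ t ∈ Icc 0 t₀, ∀ x ∈ Icc 0 L, |F t x| ≤ G t := fun t ht x hx =>
    le_csSup (isCompact_Icc.bddAbove_image
      (hFcont.abs.comp (Continuous.prodMk_right t).continuousOn fun _ hξ => mk_mem_prod ht hξ))
      (mem_image_of_mem _ hx)
  set g : ℝ → ℝ := IccExtend ht₀.le ((Icc 0 t₀).domRestrict G)
  have hgG : EqOn g G (Icc 0 t₀) := fun t ht => IccExtend_of_mem _ _ ht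
  rw [← integral_congr (hgG.mono (uIcc_of_le ht₀.le).subset)]
  exact abs_le_mul_exp_integral_of_transport_Ioo ht₀ hL hM hGcont.domRestrict.Icc_extend'
    (fun t ht x hx => hgG ht ▸ hFG t ht x hx) hycont hyt hyx
    (fun t ht x hx => (hvpos t (Ioo_subset_Icc_self ht) x (Ioo_subset_Icc_self hx)).le)
    heq hinit hbdry

/-- Barrier/comparison estimate for the transport equation with a
zero-order term: if `v > 0` is continuous, `F` is continuous, `y ∈ C¹([0,t₀] × [0,L])`
(partial derivatives `yt`, `yx`, continuous on the rectangle) satisfies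
`∂ₜy + v ∂ₓy + F y = 0` on `(0,t₀) × (0,L)`, and `|y| ≤ M` on `{t = 0}` and `{x = 0}`,
then `|y(t,x)| ≤ M exp(∫₀^{t₀} max_{ξ ∈ [0,L]} |F(τ,ξ)| dτ)` on `[0,t₀] × [0,L]`. -/
theorem statement12
    (t₀ L : ℝ) (ht₀ : 0 < t₀) (hL : 0 < L)
    (v F y yt yx : ℝ → ℝ → ℝ) (M : ℝ) (hM : 0 ≤ M)
    (hvcont : ContinuousOn (fun p : ℝ × ℝ => v p.1 p.2) (Icc 0 t₀ ×ˢ Icc 0 L))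
    (hvpos : ∀ t ∈ Icc (0:ℝ) t₀, ∀ x ∈ Icc (0:ℝ) L, 0 < v t x)
    (hFcont : ContinuousOn (fun p : ℝ × ℝ => F p.1 p.2) (Icc 0 t₀ ×ˢ Icc 0 L))
    (hycont : ContinuousOn (fun p : ℝ × ℝ => y p.1 p.2) (Icc 0 t₀ ×ˢ Icc 0 L))
    (hytcont : ContinuousOn (fun p : ℝ × ℝ => yt p.1 p.2) (Icc 0 t₀ ×ˢ Icc 0 L))
    (hyxcont : ContinuousOn (fun p : ℝ × ℝ => yx p.1 p.2) (Icc 0 t₀ ×ˢ Icc 0 L))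
    (hyt : ∀ t ∈ Icc (0:ℝ) t₀, ∀ x ∈ Icc (0:ℝ) L,
        HasDerivWithinAt (fun s => y s x) (yt t x) (Icc 0 t₀) t)
    (hyx : ∀ t ∈ Icc (0:ℝ) t₀, ∀ x ∈ Icc (0:ℝ) L,
        HasDerivWithinAt (fun ξ => y t ξ) (yx t x) (Icc 0 L) x)
    (heq : ∀ t ∈ Ioo (0:ℝ) t₀, ∀ x ∈ Ioo (0:ℝ) L,
        yt t x + v t x * yx t x + F t x * y t x = 0)
    (hinit : ∀ x ∈ Icc (0:ℝ) L, |y 0 x| ≤ M)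
    (hbdry : ∀ t ∈ Icc (0:ℝ) t₀, |y t 0| ≤ M) :
    ∀ t ∈ Icc (0:ℝ) t₀, ∀ x ∈ Icc (0:ℝ) L,
      |y t x| ≤ M * Real.exp (∫ τ in (0:ℝ)..t₀, sSup ((fun ξ => |F τ ξ|) '' Icc (0:ℝ) L)) :=
  statement12_general t₀ L ht₀ hL v F y yt yx M hM hvpos hFcont hycont hyt hyx heq hinit hbdry
end

section
/- Let T, L > 0 and constants 0 < v_m, V_M, 0 < S_m ≤ S_M. Let v_in, v_L : [0,T] → ℝ with 0 < v_m ≤ v_in(t) < v_L(t) ≤ V_M, let S₀ ∈ C¹([0,T]) with S_m ≤ S₀(t) ≤ S_M, and let S₁ ∈ C¹([0,L]) with S_m ≤ S₁(x) ≤ S_M. Let A : [0,T] × [0,L] → ℝ be strictly positive with A and ∂ₓA continuously differentiable on [0,T] × [0,L], and let v ∈ C¹([0,T] × [0,L]) be such that: ∂ₜA + ∂ₓ(vA) = 0 on (0,T) × (0,L); A(t,x) ∂ₓv(t,x) is independent of x for each t; A(t,0) = S₀(t), A(0,x) = S₁(x), v(t,0) = v_in(t), v(t,L) = v_L(t). Set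 K := max( (max_{x∈[0,L]} |S₁′(x)|)/S_m , (1/(v_m S_m)) · ( max_{t∈[0,T]} |S₀′(t)| + V_M S_M / L ) ). Then A(t,x) ≥ S_m · exp(−K L) for all (t,x) ∈ [0,T] × [0,L]. -/
/-!
Because `A ∂ₓv = χ(t)` does not depend on `x`, positivity of `A` and `v_in < v_L` force `χ > 0`
and `∂ₓv > 0`, hence `v ≥ v_m`, and mass conservation becomes the transport equation
`∂ₜA + v ∂ₓA = -χ`. Its maximum principle gives `A ≤ S_M`, and integrating `∂ₓv = χ / A` over
`[0, L]` gives `χ ≤ V_M S_M / L`. Differentiating in `x`, `u = ∂ₓA + K A = A (∂ₓ log A + K)`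
satisfies `∂ₜu + v ∂ₓu = -(∂ₓv) u`, so `u` cannot reach a negative minimum off the parabolic
boundary; there the choice of `K` makes `u ≥ 0`, on `x = 0` through the boundary formula
`v_in ∂ₓA = -(S₀' + χ)`. Hence `A e^{Kx}` is nondecreasing in `x` and
`A(t, x) ≥ S₀(t) e^{-Kx} ≥ S_m e^{-KL}`.
-/

open Set Filter Topology

theorem HasDerivWithinAt.nonpos_of_isMinOn_Icc {f : ℝ → ℝ} {a b d : ℝ} (hab : a < b)
    (hf : HasDerivWithinAt f d (Icc a b) b) (hmin : IsMinOn f (Icc a b) b) : d ≤ 0 := by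
  have hseg : segment ℝ b a ⊆ Icc a b := by rw [segment_symm, segment_eq_Icc hab.le]
  have := hmin.localize.hasFDerivWithinAt_nonneg hf.hasFDerivWithinAt
    (sub_mem_posTangentConeAt_of_segment_subset hseg)
  simp only [ContinuousLinearMap.toSpanSingleton_apply, smul_eq_mul] at this
  nlinarith

theorem exists_doubleDiff_eq_mul_sq {f f₁ f₁₂ : ℝ → ℝ → ℝ} {a b h : ℝ} (hh : 0 < h)
    (h₁ : ∀ s ∈ Icc a (a + h), ∀ y ∈ Icc b (b + h), HasDerivAt (f · y) (f₁ s y) s)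
    (h₁₂ : ∀ s ∈ Icc a (a + h), ∀ y ∈ Icc b (b + h), HasDerivAt (f₁ s ·) (f₁₂ s y) y) :
    ∃ s ∈ Ioo a (a + h), ∃ y ∈ Ioo b (b + h),
      f (a + h) (b + h) - f (a + h) b - f a (b + h) + f a b = h ^ 2 * f₁₂ s y := by
  have hb : b + h ∈ Icc b (b + h) := right_mem_Icc.2 (by linarith)
  have hb' : b ∈ Icc b (b + h) := left_mem_Icc.2 (by linarith)
  have hdiff : ∀ s ∈ Icc a (a + h), HasDerivAt (fun s => f s (b + h) - f s b)
      (f₁ s (b + h) - f₁ s b) s := fun s hs => (h₁ s hs _ hb).sub (h₁ s hs _ hb')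
  obtain ⟨s, hs, hs_slope⟩ := exists_hasDerivAt_eq_slope _ _ (by linarith : a < a + h)
    (fun s hs => (hdiff s hs).continuousAt.continuousWithinAt)
    (fun s hs => hdiff s (Ioo_subset_Icc_self hs))
  obtain ⟨y, hy, hy_slope⟩ := exists_hasDerivAt_eq_slope _ _ (by linarith : b < b + h)
    (fun y hy => (h₁₂ s (Ioo_subset_Icc_self hs) y hy).continuousAt.continuousWithinAt)
    (fun y hy => h₁₂ s (Ioo_subset_Icc_self hs) y (Ioo_subset_Icc_self hy))
  refine ⟨s, hs, y, hy, ?_⟩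
  rw [hy_slope, hs_slope, add_sub_cancel_left, add_sub_cancel_left]
  field_simp
  ring

theorem tendsto_doubleDiff_div_sq {f f₁ f₁₂ : ℝ → ℝ → ℝ} {a b : ℝ}
    (h₁ : ∀ᶠ p in 𝓝 (a, b), HasDerivAt (f · p.2) (f₁ p.1 p.2) p.1)
    (h₁₂ : ∀ᶠ p in 𝓝 (a, b), HasDerivAt (f₁ p.1 ·) (f₁₂ p.1 p.2) p.2)
    (hc : ContinuousAt (fun p : ℝ × ℝ => f₁₂ p.1 p.2) (a, b)) :
    Tendsto (fun h => (f (a + h) (b + h) - f (a + h) b - f a (b + h) + f a b) / h ^ 2)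
      (𝓝[>] 0) (𝓝 (f₁₂ a b)) := by
  obtain ⟨r, hr, hball⟩ := Metric.eventually_nhds_iff.1 (h₁.and h₁₂)
  rw [Metric.tendsto_nhdsWithin_nhds]
  intro ε hε
  obtain ⟨δ, hδ, hcδ⟩ := Metric.continuousAt_iff.1 hc ε hε
  refine ⟨min r δ, lt_min hr hδ, fun h hh hdist => ?_⟩
  rw [mem_Ioi] at hh
  rw [Real.dist_0_eq_abs, abs_of_pos hh, lt_min_iff] at hdist
  have hbox : ∀ s ∈ Icc a (a + h), ∀ y ∈ Icc b (b + h), dist (s, y) (a, b) < min r δ := by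
    intro s hs y hy
    rw [Prod.dist_eq, Real.dist_eq, Real.dist_eq, abs_of_nonneg (by linarith [hs.1]),
      abs_of_nonneg (by linarith [hy.1])]
    exact max_lt (by linarith [hs.2, lt_min hdist.1 hdist.2])
      (by linarith [hy.2, lt_min hdist.1 hdist.2])
  obtain ⟨s, hs, y, hy, hF⟩ := exists_doubleDiff_eq_mul_sq hh
    (fun s hs y hy => (hball (lt_min_iff.1 (hbox s hs y hy)).1).1)
    (fun s hs y hy => (hball (lt_min_iff.1 (hbox s hs y hy)).1).2)
  rw [hF, mul_div_cancel_left₀ _ (by positivity)]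
  exact hcδ (lt_min_iff.1 (hbox s (Ioo_subset_Icc_self hs) y (Ioo_subset_Icc_self hy))).2

/- Mathlib's `second_derivative_symmetric` needs a Fréchet differentiable gradient; here only the
two mixed partials are known to exist and be continuous, hence Schwarz's double-difference proof. -/
theorem mixed_partials_eq_s13 {f f₁ f₂ f₁₂ f₂₁ : ℝ → ℝ → ℝ} {a b : ℝ}
    (h₁ : ∀ᶠ p in 𝓝 (a, b), HasDerivAt (f · p.2) (f₁ p.1 p.2) p.1)
    (h₂ : ∀ᶠ p in 𝓝 (a, b), HasDerivAt (f p.1 ·) (f₂ p.1 p.2) p.2)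
    (h₁₂ : ∀ᶠ p in 𝓝 (a, b), HasDerivAt (f₁ p.1 ·) (f₁₂ p.1 p.2) p.2)
    (h₂₁ : ∀ᶠ p in 𝓝 (a, b), HasDerivAt (f₂ · p.2) (f₂₁ p.1 p.2) p.1)
    (hc₁₂ : ContinuousAt (fun p : ℝ × ℝ => f₁₂ p.1 p.2) (a, b))
    (hc₂₁ : ContinuousAt (fun p : ℝ × ℝ => f₂₁ p.1 p.2) (a, b)) :
    f₁₂ a b = f₂₁ a b := by
  have hswap : Tendsto Prod.swap (𝓝 (b, a)) (𝓝 (a, b)) := continuous_swap.tendsto (b, a)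
  refine tendsto_nhds_unique (tendsto_doubleDiff_div_sq h₁ h₁₂ hc₁₂) ?_
  have := tendsto_doubleDiff_div_sq (f := fun y s => f s y) (f₁ := fun y s => f₂ s y)
    (f₁₂ := fun y s => f₂₁ s y) (hswap.eventually h₂) (hswap.eventually h₂₁)
    (hc₂₁.comp_of_eq continuous_swap.continuousAt rfl)
  refine this.congr fun h => ?_
  ring_nf

section Rectangle

variable {T L : ℝ}

theorem eq_on_Icc_prod_of_eq_on_Ioo_prod (hT : 0 < T) (hL : 0 < L) {f g : ℝ → ℝ → ℝ}
    (hf : ContinuousOn (fun p : ℝ × ℝ => f p.1 p.2) (Icc 0 T ×ˢ Icc 0 L))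
    (hg : ContinuousOn (fun p : ℝ × ℝ => g p.1 p.2) (Icc 0 T ×ˢ Icc 0 L))
    (h : ∀ t ∈ Ioo (0:ℝ) T, ∀ x ∈ Ioo (0:ℝ) L, f t x = g t x) :
    ∀ t ∈ Icc (0:ℝ) T, ∀ x ∈ Icc (0:ℝ) L, f t x = g t x := by
  have hcl : Icc (0:ℝ) T ×ˢ Icc (0:ℝ) L ⊆ closure (Ioo 0 T ×ˢ Ioo 0 L) := by
    rw [closure_prod_eq, closure_Ioo hT.ne, closure_Ioo hL.ne]
  intro t ht x hx
  exact EqOn.of_subset_closure (fun p hp => h p.1 hp.1 p.2 hp.2) hf hg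
    (prod_mono Ioo_subset_Icc_self Ioo_subset_Icc_self) hcl (mk_mem_prod ht hx)

theorem eventually_hasDerivAt_fst {f f₁ : ℝ → ℝ → ℝ}
    (hf : ∀ t ∈ Icc (0:ℝ) T, ∀ x ∈ Icc (0:ℝ) L, HasDerivWithinAt (f · x) (f₁ t x) (Icc 0 T) t)
    {t x : ℝ} (ht : t ∈ Ioo 0 T) (hx : x ∈ Ioo 0 L) :
    ∀ᶠ p in 𝓝 (t, x), HasDerivAt (f · p.2) (f₁ p.1 p.2) p.1 := by
  filter_upwards [prod_mem_nhds (isOpen_Ioo.mem_nhds ht) (isOpen_Ioo.mem_nhds hx)] with p hp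
  exact (hf _ (Ioo_subset_Icc_self hp.1) _ (Ioo_subset_Icc_self hp.2)).hasDerivAt
    (Icc_mem_nhds hp.1.1 hp.1.2)

theorem eventually_hasDerivAt_snd {f f₂ : ℝ → ℝ → ℝ}
    (hf : ∀ t ∈ Icc (0:ℝ) T, ∀ x ∈ Icc (0:ℝ) L, HasDerivWithinAt (f t ·) (f₂ t x) (Icc 0 L) x)
    {t x : ℝ} (ht : t ∈ Ioo 0 T) (hx : x ∈ Ioo 0 L) :
    ∀ᶠ p in 𝓝 (t, x), HasDerivAt (f p.1 ·) (f₂ p.1 p.2) p.2 := by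
  filter_upwards [prod_mem_nhds (isOpen_Ioo.mem_nhds ht) (isOpen_Ioo.mem_nhds hx)] with p hp
  exact (hf _ (Ioo_subset_Icc_self hp.1) _ (Ioo_subset_Icc_self hp.2)).hasDerivAt
    (Icc_mem_nhds hp.2.1 hp.2.2)

theorem mixed_partials_eq_on_Icc_prod (hT : 0 < T) (hL : 0 < L)
    {f f₁ f₂ f₁₂ f₂₁ : ℝ → ℝ → ℝ}
    (h₁ : ∀ t ∈ Icc (0:ℝ) T, ∀ x ∈ Icc (0:ℝ) L, HasDerivWithinAt (f · x) (f₁ t x) (Icc 0 T) t)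
    (h₂ : ∀ t ∈ Icc (0:ℝ) T, ∀ x ∈ Icc (0:ℝ) L, HasDerivWithinAt (f t ·) (f₂ t x) (Icc 0 L) x)
    (h₁₂ : ∀ t ∈ Icc (0:ℝ) T, ∀ x ∈ Icc (0:ℝ) L,
      HasDerivWithinAt (f₁ t ·) (f₁₂ t x) (Icc 0 L) x)
    (h₂₁ : ∀ t ∈ Icc (0:ℝ) T, ∀ x ∈ Icc (0:ℝ) L,
      HasDerivWithinAt (f₂ · x) (f₂₁ t x) (Icc 0 T) t)
    (hc₁₂ : ContinuousOn (fun p : ℝ × ℝ => f₁₂ p.1 p.2) (Icc 0 T ×ˢ Icc 0 L))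
    (hc₂₁ : ContinuousOn (fun p : ℝ × ℝ => f₂₁ p.1 p.2) (Icc 0 T ×ˢ Icc 0 L)) :
    ∀ t ∈ Icc (0:ℝ) T, ∀ x ∈ Icc (0:ℝ) L, f₁₂ t x = f₂₁ t x := by
  refine eq_on_Icc_prod_of_eq_on_Ioo_prod hT hL hc₁₂ hc₂₁ fun t ht x hx => ?_
  have hmem : Icc (0:ℝ) T ×ˢ Icc (0:ℝ) L ∈ 𝓝 (t, x) :=
    prod_mem_nhds (Icc_mem_nhds ht.1 ht.2) (Icc_mem_nhds hx.1 hx.2)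
  exact mixed_partials_eq_s13 (eventually_hasDerivAt_fst h₁ ht hx)
    (eventually_hasDerivAt_snd h₂ ht hx) (eventually_hasDerivAt_snd h₁₂ ht hx)
    (eventually_hasDerivAt_fst h₂₁ ht hx) (hc₁₂.continuousAt hmem) (hc₂₁.continuousAt hmem)

theorem nonneg_of_transport_of_boundary_nonneg {u ut ux v : ℝ → ℝ → ℝ}
    (hu : ContinuousOn (fun p : ℝ × ℝ => u p.1 p.2) (Icc 0 T ×ˢ Icc 0 L))
    (hut : ∀ t ∈ Icc (0:ℝ) T, ∀ x ∈ Icc (0:ℝ) L, HasDerivWithinAt (u · x) (ut t x) (Icc 0 T) t)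
    (hux : ∀ t ∈ Icc (0:ℝ) T, ∀ x ∈ Icc (0:ℝ) L, HasDerivWithinAt (u t ·) (ux t x) (Icc 0 L) x)
    (hv : ∀ t ∈ Icc (0:ℝ) T, ∀ x ∈ Icc (0:ℝ) L, 0 ≤ v t x)
    (htransport : ∀ t ∈ Icc (0:ℝ) T, ∀ x ∈ Icc (0:ℝ) L,
      u t x < 0 → 0 < ut t x + v t x * ux t x)
    (hinit : ∀ x ∈ Icc (0:ℝ) L, 0 ≤ u 0 x) (hinlet : ∀ t ∈ Icc (0:ℝ) T, 0 ≤ u t 0) :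
    ∀ t ∈ Icc (0:ℝ) T, ∀ x ∈ Icc (0:ℝ) L, 0 ≤ u t x := by
  intro t ht x hx
  obtain ⟨⟨s, y⟩, ⟨hs, hy⟩, hmin⟩ :=
    (isCompact_Icc.prod isCompact_Icc).exists_isMinOn ⟨(t, x), ht, hx⟩ hu
  refine le_trans ?_ (hmin (mk_mem_prod ht hx))
  by_contra! hneg
  have hs0 : 0 < s := hs.1.lt_of_ne (by rintro rfl; linarith [hinit y hy])
  have hy0 : 0 < y := hy.1.lt_of_ne (by rintro rfl; linarith [hinlet s hs])
  have hut_nonpos : ut s y ≤ 0 :=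
    ((hut s hs y hy).mono (Icc_subset_Icc_right hs.2)).nonpos_of_isMinOn_Icc hs0
      fun r hr => hmin (mk_mem_prod ⟨hr.1, hr.2.trans hs.2⟩ hy)
  have hux_nonpos : ux s y ≤ 0 :=
    ((hux s hs y hy).mono (Icc_subset_Icc_right hy.2)).nonpos_of_isMinOn_Icc hy0
      fun r hr => hmin (mk_mem_prod hs ⟨hr.1, hr.2.trans hy.2⟩)
  linarith [htransport s hs y hy hneg, mul_nonpos_of_nonneg_of_nonpos (hv s hs y hy) hux_nonpos]

end Rectangle

section Interval

variable {f f' g g' : ℝ → ℝ} {a b c : ℝ}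

theorem monotoneOn_Icc_of_hasDerivWithinAt_nonneg
    (hf : ∀ x ∈ Icc a b, HasDerivWithinAt f (f' x) (Icc a b) x)
    (hf' : ∀ x ∈ Ioo a b, 0 ≤ f' x) : MonotoneOn f (Icc a b) := by
  refine monotoneOn_of_hasDerivWithinAt_nonneg (convex_Icc a b)
    (fun x hx => (hf x hx).continuousWithinAt) ?_ (by rwa [interior_Icc])
  rw [interior_Icc]
  exact fun x hx => (hf x (Ioo_subset_Icc_self hx)).mono Ioo_subset_Icc_self

theorem pos_of_mul_deriv_eq_const (hab : a ≤ b) (hf : ∀ x ∈ Icc a b, 0 < f x)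
    (hg : ∀ x ∈ Icc a b, HasDerivWithinAt g (g' x) (Icc a b) x)
    (hfg : ∀ x ∈ Icc a b, f x * g' x = c) (hlt : g a < g b) : 0 < c := by
  by_contra! hc
  have hanti : MonotoneOn (fun x => -g x) (Icc a b) :=
    monotoneOn_Icc_of_hasDerivWithinAt_nonneg (fun x hx => (hg x hx).neg) fun x hx => by
      nlinarith [hfg x (Ioo_subset_Icc_self hx), hf x (Ioo_subset_Icc_self hx)]
  linarith [hanti (left_mem_Icc.2 hab) (right_mem_Icc.2 hab) hab]

theorem mul_sub_le_of_mul_deriv_eq_const {M : ℝ} (hab : a ≤ b) (hf : ∀ x ∈ Icc a b, 0 < f x)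
    (hfM : ∀ x ∈ Icc a b, f x ≤ M) (hc : 0 ≤ c)
    (hg : ∀ x ∈ Icc a b, HasDerivWithinAt g (g' x) (Icc a b) x)
    (hfg : ∀ x ∈ Icc a b, f x * g' x = c) : c * (b - a) ≤ M * (g b - g a) := by
  have hmono : MonotoneOn (fun x => M * g x - c * x) (Icc a b) := by
    refine monotoneOn_Icc_of_hasDerivWithinAt_nonneg (f' := fun x => M * g' x - c * 1)
      (fun x hx => ((hg x hx).const_mul M).sub ((hasDerivWithinAt_id x _).const_mul c))
      fun x hx => ?_
    have hx' := Ioo_subset_Icc_self hx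
    have hg'_nonneg : 0 ≤ g' x := by nlinarith [hfg x hx', hf x hx']
    nlinarith [hfg x hx', hfM x hx']
  linarith [hmono (left_mem_Icc.2 hab) (right_mem_Icc.2 hab) hab]

theorem monotoneOn_mul_exp_of_deriv_add_mul_nonneg {K : ℝ}
    (hf : ∀ x ∈ Icc a b, HasDerivWithinAt f (f' x) (Icc a b) x)
    (hK : ∀ x ∈ Ioo a b, 0 ≤ f' x + K * f x) :
    MonotoneOn (fun x => f x * Real.exp (K * x)) (Icc a b) := by
  refine monotoneOn_Icc_of_hasDerivWithinAt_nonneg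
    (f' := fun x => f' x * Real.exp (K * x) + f x * (Real.exp (K * x) * (K * 1)))
    (fun x hx => (hf x hx).mul ((hasDerivWithinAt_id x _).const_mul K).exp) fun x hx => ?_
  have := mul_nonneg (hK x hx) (Real.exp_pos (K * x)).le
  linarith

theorem mul_exp_neg_le_of_deriv_add_mul_nonneg {K m : ℝ} (hK : 0 ≤ K) (hm : 0 ≤ m)
    (hf : ∀ x ∈ Icc a b, HasDerivWithinAt f (f' x) (Icc a b) x)
    (hK' : ∀ x ∈ Ioo a b, 0 ≤ f' x + K * f x) (hfa : m ≤ f a) :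
    ∀ x ∈ Icc a b, m * Real.exp (-K * (b - a)) ≤ f x := by
  intro x hx
  have hmono := monotoneOn_mul_exp_of_deriv_add_mul_nonneg hf hK'
    (left_mem_Icc.2 (hx.1.trans hx.2)) hx hx.1
  calc m * Real.exp (-K * (b - a))
      ≤ f a * Real.exp (K * a - K * x) :=
        mul_le_mul hfa (Real.exp_le_exp.2 (by nlinarith [hx.2])) (Real.exp_pos _).le
          (hm.trans hfa)
    _ = f a * Real.exp (K * a) / Real.exp (K * x) := by rw [Real.exp_sub, mul_div_assoc]
    _ ≤ f x := by rw [div_le_iff₀ (Real.exp_pos _)]; exact hmono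

end Interval

theorem hasDerivWithinAt_Icc_unique {f g : ℝ → ℝ} {a b x d e : ℝ} (hab : a < b)
    (hx : x ∈ Icc a b) (hfg : EqOn f g (Icc a b)) (hf : HasDerivWithinAt f d (Icc a b) x)
    (hg : HasDerivWithinAt g e (Icc a b) x) : d = e :=
  (uniqueDiffOn_Icc hab x hx).eq_deriv _ hf (hg.congr hfg (hfg hx))

theorem abs_le_sSup_image_abs {f : ℝ → ℝ} {a b x : ℝ} (hf : ContinuousOn f (Icc a b))
    (hx : x ∈ Icc a b) : |f x| ≤ sSup ((fun z => |f z|) '' Icc a b) :=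
  le_csSup (isCompact_Icc.image_of_continuousOn hf.abs).bddAbove ⟨x, hx, rfl⟩

section MatovichPearson

variable {T L : ℝ} {A At Ax Axt Axx v vx : ℝ → ℝ → ℝ} {χ : ℝ → ℝ}

theorem transport_eq_of_mass_of_momentum (hT : 0 < T) (hL : 0 < L)
    (hAcont : ContinuousOn (fun p : ℝ × ℝ => A p.1 p.2) (Icc 0 T ×ˢ Icc 0 L))
    (hAtcont : ContinuousOn (fun p : ℝ × ℝ => At p.1 p.2) (Icc 0 T ×ˢ Icc 0 L))
    (hAxcont : ContinuousOn (fun p : ℝ × ℝ => Ax p.1 p.2) (Icc 0 T ×ˢ Icc 0 L))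
    (hvcont : ContinuousOn (fun p : ℝ × ℝ => v p.1 p.2) (Icc 0 T ×ˢ Icc 0 L))
    (hvxcont : ContinuousOn (fun p : ℝ × ℝ => vx p.1 p.2) (Icc 0 T ×ˢ Icc 0 L))
    (hmass : ∀ t ∈ Ioo (0:ℝ) T, ∀ x ∈ Ioo (0:ℝ) L,
        At t x + (vx t x * A t x + v t x * Ax t x) = 0)
    (hmom : ∀ t ∈ Icc (0:ℝ) T, ∀ x ∈ Icc (0:ℝ) L, ∀ y ∈ Icc (0:ℝ) L,
        A t x * vx t x = A t y * vx t y) :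
    ∀ t ∈ Icc (0:ℝ) T, ∀ x ∈ Icc (0:ℝ) L, At t x + A t 0 * vx t 0 + v t x * Ax t x = 0 := by
  have h0L : (0:ℝ) ∈ Icc 0 L := left_mem_Icc.2 hL.le
  have hflux_cont : ContinuousOn (fun p : ℝ × ℝ => A p.1 0 * vx p.1 0) (Icc 0 T ×ˢ Icc 0 L) :=
    (hAcont.mul hvxcont).comp (continuous_fst.prodMk continuous_const).continuousOn
      fun p hp => ⟨hp.1, h0L⟩
  refine eq_on_Icc_prod_of_eq_on_Ioo_prod hT hL (g := fun _ _ => 0)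
    ((hAtcont.add hflux_cont).add (hvcont.mul hAxcont)) continuousOn_const fun t ht x hx => ?_
  linear_combination
    hmass t ht x hx - hmom t (Ioo_subset_Icc_self ht) x (Ioo_subset_Icc_self hx) 0 h0L

theorem le_of_transport_of_boundary_le {M : ℝ}
    (hAcont : ContinuousOn (fun p : ℝ × ℝ => A p.1 p.2) (Icc 0 T ×ˢ Icc 0 L))
    (hAt : ∀ t ∈ Icc (0:ℝ) T, ∀ x ∈ Icc (0:ℝ) L,
        HasDerivWithinAt (fun s => A s x) (At t x) (Icc 0 T) t)
    (hAx : ∀ t ∈ Icc (0:ℝ) T, ∀ x ∈ Icc (0:ℝ) L,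
        HasDerivWithinAt (fun y => A t y) (Ax t x) (Icc 0 L) x)
    (hv : ∀ t ∈ Icc (0:ℝ) T, ∀ x ∈ Icc (0:ℝ) L, 0 ≤ v t x)
    (hχ : ∀ t ∈ Icc (0:ℝ) T, 0 < χ t)
    (htransport : ∀ t ∈ Icc (0:ℝ) T, ∀ x ∈ Icc (0:ℝ) L, At t x + χ t + v t x * Ax t x = 0)
    (hinit : ∀ x ∈ Icc (0:ℝ) L, A 0 x ≤ M) (hinlet : ∀ t ∈ Icc (0:ℝ) T, A t 0 ≤ M) :
    ∀ t ∈ Icc (0:ℝ) T, ∀ x ∈ Icc (0:ℝ) L, A t x ≤ M := by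
  intro t ht x hx
  refine sub_nonneg.1 (nonneg_of_transport_of_boundary_nonneg (u := fun t x => M - A t x)
    (continuousOn_const.sub hAcont) (fun t ht x hx => (hAt t ht x hx).const_sub M)
    (fun t ht x hx => (hAx t ht x hx).const_sub M) hv (fun t ht x hx _ => ?_)
    (fun x hx => sub_nonneg.2 (hinit x hx)) (fun t ht => sub_nonneg.2 (hinlet t ht)) t ht x hx)
  linarith [htransport t ht x hx, hχ t ht]

theorem deriv_x_transport_eq (hT : 0 < T) (hL : 0 < L)
    (hAt : ∀ t ∈ Icc (0:ℝ) T, ∀ x ∈ Icc (0:ℝ) L,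
        HasDerivWithinAt (fun s => A s x) (At t x) (Icc 0 T) t)
    (hAx : ∀ t ∈ Icc (0:ℝ) T, ∀ x ∈ Icc (0:ℝ) L,
        HasDerivWithinAt (fun y => A t y) (Ax t x) (Icc 0 L) x)
    (hAxt : ∀ t ∈ Icc (0:ℝ) T, ∀ x ∈ Icc (0:ℝ) L,
        HasDerivWithinAt (fun s => Ax s x) (Axt t x) (Icc 0 T) t)
    (hAxx : ∀ t ∈ Icc (0:ℝ) T, ∀ x ∈ Icc (0:ℝ) L,
        HasDerivWithinAt (fun y => Ax t y) (Axx t x) (Icc 0 L) x)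
    (hvx : ∀ t ∈ Icc (0:ℝ) T, ∀ x ∈ Icc (0:ℝ) L,
        HasDerivWithinAt (fun y => v t y) (vx t x) (Icc 0 L) x)
    (hAxcont : ContinuousOn (fun p : ℝ × ℝ => Ax p.1 p.2) (Icc 0 T ×ˢ Icc 0 L))
    (hAxtcont : ContinuousOn (fun p : ℝ × ℝ => Axt p.1 p.2) (Icc 0 T ×ˢ Icc 0 L))
    (hAxxcont : ContinuousOn (fun p : ℝ × ℝ => Axx p.1 p.2) (Icc 0 T ×ˢ Icc 0 L))
    (hvcont : ContinuousOn (fun p : ℝ × ℝ => v p.1 p.2) (Icc 0 T ×ˢ Icc 0 L))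
    (hvxcont : ContinuousOn (fun p : ℝ × ℝ => vx p.1 p.2) (Icc 0 T ×ˢ Icc 0 L))
    (htransport : ∀ t ∈ Icc (0:ℝ) T, ∀ x ∈ Icc (0:ℝ) L, At t x + χ t + v t x * Ax t x = 0) :
    ∀ t ∈ Icc (0:ℝ) T, ∀ x ∈ Icc (0:ℝ) L,
      Axt t x + vx t x * Ax t x + v t x * Axx t x = 0 := by
  have hAtx : ∀ t ∈ Icc (0:ℝ) T, ∀ x ∈ Icc (0:ℝ) L, HasDerivWithinAt (fun y => At t y)
      (-(vx t x * Ax t x + v t x * Axx t x)) (Icc 0 L) x := fun t ht x hx => by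
    refine (((hvx t ht x hx).fun_mul (hAxx t ht x hx)).const_sub (-χ t)).congr
      (fun y hy => ?_) ?_ |>.congr_deriv (by ring)
    · linarith [htransport t ht y hy]
    · linarith [htransport t ht x hx]
  intro t ht x hx
  have := mixed_partials_eq_on_Icc_prod hT hL hAt hAx hAtx hAxt
    ((hvxcont.mul hAxcont).add (hvcont.mul hAxxcont)).neg hAxtcont t ht x hx
  linarith

theorem slope_add_mul_nonneg_of_transport {K : ℝ}
    (hAcont : ContinuousOn (fun p : ℝ × ℝ => A p.1 p.2) (Icc 0 T ×ˢ Icc 0 L))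
    (hAxcont : ContinuousOn (fun p : ℝ × ℝ => Ax p.1 p.2) (Icc 0 T ×ˢ Icc 0 L))
    (hAt : ∀ t ∈ Icc (0:ℝ) T, ∀ x ∈ Icc (0:ℝ) L,
        HasDerivWithinAt (fun s => A s x) (At t x) (Icc 0 T) t)
    (hAx : ∀ t ∈ Icc (0:ℝ) T, ∀ x ∈ Icc (0:ℝ) L,
        HasDerivWithinAt (fun y => A t y) (Ax t x) (Icc 0 L) x)
    (hAxt : ∀ t ∈ Icc (0:ℝ) T, ∀ x ∈ Icc (0:ℝ) L,
        HasDerivWithinAt (fun s => Ax s x) (Axt t x) (Icc 0 T) t)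
    (hAxx : ∀ t ∈ Icc (0:ℝ) T, ∀ x ∈ Icc (0:ℝ) L,
        HasDerivWithinAt (fun y => Ax t y) (Axx t x) (Icc 0 L) x)
    (hv : ∀ t ∈ Icc (0:ℝ) T, ∀ x ∈ Icc (0:ℝ) L, 0 ≤ v t x)
    (hvx : ∀ t ∈ Icc (0:ℝ) T, ∀ x ∈ Icc (0:ℝ) L, 0 < vx t x)
    (hflux : ∀ t ∈ Icc (0:ℝ) T, ∀ x ∈ Icc (0:ℝ) L, A t x * vx t x = χ t)
    (htransport : ∀ t ∈ Icc (0:ℝ) T, ∀ x ∈ Icc (0:ℝ) L, At t x + χ t + v t x * Ax t x = 0)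
    (hdtransport : ∀ t ∈ Icc (0:ℝ) T, ∀ x ∈ Icc (0:ℝ) L,
      Axt t x + vx t x * Ax t x + v t x * Axx t x = 0)
    (hinit : ∀ x ∈ Icc (0:ℝ) L, 0 ≤ Ax 0 x + K * A 0 x)
    (hinlet : ∀ t ∈ Icc (0:ℝ) T, 0 ≤ Ax t 0 + K * A t 0) :
    ∀ t ∈ Icc (0:ℝ) T, ∀ x ∈ Icc (0:ℝ) L, 0 ≤ Ax t x + K * A t x := by
  refine nonneg_of_transport_of_boundary_nonneg (hAxcont.add (continuousOn_const.mul hAcont))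
    (fun t ht x hx => (hAxt t ht x hx).add ((hAt t ht x hx).const_mul K))
    (fun t ht x hx => (hAxx t ht x hx).add ((hAx t ht x hx).const_mul K)) hv
    (fun t ht x hx hu => ?_) hinit hinlet
  have hdamped : Axt t x + K * At t x + v t x * (Axx t x + K * Ax t x) =
      -(vx t x * (Ax t x + K * A t x)) := by
    linear_combination hdtransport t ht x hx + K * htransport t ht x hx + K * hflux t ht x hx
  rw [hdamped, neg_pos]
  exact mul_neg_of_pos_of_neg (hvx t ht x hx) hu

end MatovichPearson

theorem statement13_general
    (T L v_m V_M S_m S_M : ℝ)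
    (hT : 0 < T) (hL : 0 < L)
    (hvm : 0 < v_m)
    (hSm : 0 < S_m) (hSmM : S_m ≤ S_M)
    (v_in v_L S₀ dS₀ S₁ dS₁ : ℝ → ℝ)
    (v vx A At Ax Axt Axx : ℝ → ℝ → ℝ)
    (hdata : ∀ t ∈ Icc (0:ℝ) T, v_m ≤ v_in t ∧ v_in t < v_L t ∧ v_L t ≤ V_M)
    -- `S₀ ∈ C¹([0,T])` with `S_m ≤ S₀ ≤ S_M`
    (hS₀d : ∀ t ∈ Icc (0:ℝ) T, HasDerivWithinAt S₀ (dS₀ t) (Icc 0 T) t)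
    (hdS₀cont : ContinuousOn dS₀ (Icc 0 T))
    (hS₀b : ∀ t ∈ Icc (0:ℝ) T, S_m ≤ S₀ t ∧ S₀ t ≤ S_M)
    -- `S₁ ∈ C¹([0,L])` with `S_m ≤ S₁ ≤ S_M`
    (hS₁d : ∀ x ∈ Icc (0:ℝ) L, HasDerivWithinAt S₁ (dS₁ x) (Icc 0 L) x)
    (hdS₁cont : ContinuousOn dS₁ (Icc 0 L))
    (hS₁b : ∀ x ∈ Icc (0:ℝ) L, S_m ≤ S₁ x ∧ S₁ x ≤ S_M)
    -- `A` strictly positive, `A` and `∂ₓA` continuously differentiable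
    (hApos : ∀ t ∈ Icc (0:ℝ) T, ∀ x ∈ Icc (0:ℝ) L, 0 < A t x)
    (hAcont : ContinuousOn (fun p : ℝ × ℝ => A p.1 p.2) (Icc 0 T ×ˢ Icc 0 L))
    (hAt : ∀ t ∈ Icc (0:ℝ) T, ∀ x ∈ Icc (0:ℝ) L,
        HasDerivWithinAt (fun s => A s x) (At t x) (Icc 0 T) t)
    (hAx : ∀ t ∈ Icc (0:ℝ) T, ∀ x ∈ Icc (0:ℝ) L,
        HasDerivWithinAt (fun y => A t y) (Ax t x) (Icc 0 L) x)
    (hAtcont : ContinuousOn (fun p : ℝ × ℝ => At p.1 p.2) (Icc 0 T ×ˢ Icc 0 L))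
    (hAxcont : ContinuousOn (fun p : ℝ × ℝ => Ax p.1 p.2) (Icc 0 T ×ˢ Icc 0 L))
    (hAxt : ∀ t ∈ Icc (0:ℝ) T, ∀ x ∈ Icc (0:ℝ) L,
        HasDerivWithinAt (fun s => Ax s x) (Axt t x) (Icc 0 T) t)
    (hAxx : ∀ t ∈ Icc (0:ℝ) T, ∀ x ∈ Icc (0:ℝ) L,
        HasDerivWithinAt (fun y => Ax t y) (Axx t x) (Icc 0 L) x)
    (hAxtcont : ContinuousOn (fun p : ℝ × ℝ => Axt p.1 p.2) (Icc 0 T ×ˢ Icc 0 L))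
    (hAxxcont : ContinuousOn (fun p : ℝ × ℝ => Axx p.1 p.2) (Icc 0 T ×ˢ Icc 0 L))
    -- `v ∈ C¹([0,T] × [0,L])`
    (hvcont : ContinuousOn (fun p : ℝ × ℝ => v p.1 p.2) (Icc 0 T ×ˢ Icc 0 L))
    (hvx : ∀ t ∈ Icc (0:ℝ) T, ∀ x ∈ Icc (0:ℝ) L,
        HasDerivWithinAt (fun y => v t y) (vx t x) (Icc 0 L) x)
    (hvxcont : ContinuousOn (fun p : ℝ × ℝ => vx p.1 p.2) (Icc 0 T ×ˢ Icc 0 L))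
    -- mass conservation `∂ₜA + ∂ₓ(vA) = 0` on `(0,T) × (0,L)`
    (hmass : ∀ t ∈ Ioo (0:ℝ) T, ∀ x ∈ Ioo (0:ℝ) L,
        At t x + (vx t x * A t x + v t x * Ax t x) = 0)
    -- `A ∂ₓv` is independent of `x` for each `t`
    (hmom : ∀ t ∈ Icc (0:ℝ) T, ∀ x ∈ Icc (0:ℝ) L, ∀ y ∈ Icc (0:ℝ) L,
        A t x * vx t x = A t y * vx t y)
    -- boundary and initial conditions
    (hA0 : ∀ t ∈ Icc (0:ℝ) T, A t 0 = S₀ t)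
    (hA1 : ∀ x ∈ Icc (0:ℝ) L, A 0 x = S₁ x)
    (hvin : ∀ t ∈ Icc (0:ℝ) T, v t 0 = v_in t)
    (hvL : ∀ t ∈ Icc (0:ℝ) T, v t L = v_L t) :
    ∀ t ∈ Icc (0:ℝ) T, ∀ x ∈ Icc (0:ℝ) L,
      S_m * Real.exp
        (-(max ((sSup ((fun z => |dS₁ z|) '' Icc (0:ℝ) L)) / S_m)
            ((1 / (v_m * S_m)) *
              (sSup ((fun s => |dS₀ s|) '' Icc (0:ℝ) T) + V_M * S_M / L))) * L)
      ≤ A t x := by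
  set K := max (sSup ((fun z => |dS₁ z|) '' Icc (0:ℝ) L) / S_m)
    ((1 / (v_m * S_m)) * (sSup ((fun s => |dS₀ s|) '' Icc (0:ℝ) T) + V_M * S_M / L))
  have hK : 0 ≤ K := le_max_of_le_left <| div_nonneg
    ((abs_nonneg _).trans (abs_le_sSup_image_abs hdS₁cont (left_mem_Icc.2 hL.le))) hSm.le
  have hM₁ : sSup ((fun z => |dS₁ z|) '' Icc (0:ℝ) L) ≤ K * S_m :=
    (div_le_iff₀ hSm).1 (le_max_left _ _)
  have hM₀ : sSup ((fun s => |dS₀ s|) '' Icc (0:ℝ) T) + V_M * S_M / L ≤ K * (v_m * S_m) :=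
    (div_le_iff₀ (mul_pos hvm hSm)).1 (by rw [← one_div_mul_eq_div]; exact le_max_right _ _)
  have h0T : (0:ℝ) ∈ Icc 0 T := left_mem_Icc.2 hT.le
  have h0L : (0:ℝ) ∈ Icc 0 L := left_mem_Icc.2 hL.le
  have hflux : ∀ t ∈ Icc (0:ℝ) T, ∀ x ∈ Icc (0:ℝ) L, A t x * vx t x = A t 0 * vx t 0 :=
    fun t ht x hx => hmom t ht x hx 0 h0L
  have hχ_pos : ∀ t ∈ Icc (0:ℝ) T, 0 < A t 0 * vx t 0 := fun t ht =>
    pos_of_mul_deriv_eq_const hL.le (hApos t ht) (hvx t ht) (hflux t ht)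
      (by rw [hvin t ht, hvL t ht]; exact (hdata t ht).2.1)
  have hvx_pos : ∀ t ∈ Icc (0:ℝ) T, ∀ x ∈ Icc (0:ℝ) L, 0 < vx t x := fun t ht x hx =>
    pos_of_mul_pos_right ((hflux t ht x hx).symm ▸ hχ_pos t ht) (hApos t ht x hx).le
  have hv_nonneg : ∀ t ∈ Icc (0:ℝ) T, ∀ x ∈ Icc (0:ℝ) L, 0 ≤ v t x := fun t ht x hx =>
    hvm.le.trans <| (hdata t ht).1.trans <| hvin t ht ▸
      monotoneOn_Icc_of_hasDerivWithinAt_nonneg (hvx t ht)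
        (fun y hy => (hvx_pos t ht y (Ioo_subset_Icc_self hy)).le) h0L hx hx.1
  have htransport := transport_eq_of_mass_of_momentum hT hL hAcont hAtcont hAxcont hvcont
    hvxcont hmass hmom
  have hA_le := le_of_transport_of_boundary_le hAcont hAt hAx hv_nonneg hχ_pos htransport
    (fun x hx => hA1 x hx ▸ (hS₁b x hx).2) (fun t ht => hA0 t ht ▸ (hS₀b t ht).2)
  have hχ_le : ∀ t ∈ Icc (0:ℝ) T, A t 0 * vx t 0 * L ≤ V_M * S_M := fun t ht => by
    have := mul_sub_le_of_mul_deriv_eq_const hL.le (hApos t ht) (hA_le t ht) (hχ_pos t ht).le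
      (hvx t ht) (hflux t ht)
    rw [hvin t ht, hvL t ht, sub_zero] at this
    nlinarith [hdata t ht, hSm.trans_le hSmM]
  have hdtransport := deriv_x_transport_eq hT hL hAt hAx hAxt hAxx hvx hAxcont hAxtcont hAxxcont
    hvcont hvxcont htransport
  have hinit : ∀ x ∈ Icc (0:ℝ) L, 0 ≤ Ax 0 x + K * A 0 x := fun x hx => by
    rw [hasDerivWithinAt_Icc_unique hL hx hA1 (hAx 0 h0T x hx) (hS₁d x hx), hA1 x hx]
    nlinarith [neg_abs_le (dS₁ x), abs_le_sSup_image_abs hdS₁cont hx, hM₁,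
      mul_le_mul_of_nonneg_left (hS₁b x hx).1 hK]
  have hinlet : ∀ t ∈ Icc (0:ℝ) T, 0 ≤ Ax t 0 + K * A t 0 := fun t ht => by
    have := htransport t ht 0 h0L
    rw [hasDerivWithinAt_Icc_unique hT ht hA0 (hAt t ht 0 h0L) (hS₀d t ht), hvin t ht] at this
    have hS := hA0 t ht ▸ (hS₀b t ht).1
    have hχ := (le_div_iff₀ hL).2 (hχ_le t ht)
    refine nonneg_of_mul_nonneg_right ?_ (hvm.trans_le (hdata t ht).1)
    nlinarith [le_abs_self (dS₀ t), abs_le_sSup_image_abs hdS₀cont ht, hM₀,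
      mul_le_mul (hdata t ht).1 hS hSm.le (hvm.le.trans (hdata t ht).1), hK]
  have hslope := slope_add_mul_nonneg_of_transport hAcont hAxcont hAt hAx hAxt hAxx hv_nonneg
    hvx_pos hflux htransport hdtransport hinit hinlet
  intro t ht x hx
  simpa using mul_exp_neg_le_of_deriv_add_mul_nonneg hK hSm.le (hAx t ht)
    (fun y hy => hslope t ht y (Ioo_subset_Icc_self hy)) (hA0 t ht ▸ (hS₀b t ht).1) x hx

/-- A priori positive lower bound on the cross-sectional area for
classical solutions of the isothermal Matovich–Pearson equations without surface
tension: if `∂ₜA + ∂ₓ(vA) = 0` on `(0,T) × (0,L)`, `A ∂ₓv` is independent of `x`,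
`A(t,0) = S₀(t)`, `A(0,x) = S₁(x)`, `v(t,0) = v_in(t)`, `v(t,L) = v_L(t)`, with
`0 < v_m ≤ v_in < v_L ≤ V_M` and `S_m ≤ S₀, S₁ ≤ S_M`, `A > 0`, `A` and `∂ₓA = Ax`
continuously differentiable, `v ∈ C¹`, then with
`K := max( (max|S₁′|)/S_m , (1/(v_m S_m)) (max|S₀′| + V_M S_M / L) )` one has
`A(t,x) ≥ S_m exp(−K L)` on `[0,T] × [0,L]`. -/
theorem statement13
    (T L v_m V_M S_m S_M : ℝ)
    (hT : 0 < T) (hL : 0 < L)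
    (hvm : 0 < v_m) (hVM : 0 < V_M)
    (hSm : 0 < S_m) (hSmM : S_m ≤ S_M)
    (v_in v_L S₀ dS₀ S₁ dS₁ : ℝ → ℝ)
    (v vt vx A At Ax Axt Axx : ℝ → ℝ → ℝ)
    (hdata : ∀ t ∈ Icc (0:ℝ) T, v_m ≤ v_in t ∧ v_in t < v_L t ∧ v_L t ≤ V_M)
    -- `S₀ ∈ C¹([0,T])` with `S_m ≤ S₀ ≤ S_M`
    (hS₀d : ∀ t ∈ Icc (0:ℝ) T, HasDerivWithinAt S₀ (dS₀ t) (Icc 0 T) t)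
    (hdS₀cont : ContinuousOn dS₀ (Icc 0 T))
    (hS₀b : ∀ t ∈ Icc (0:ℝ) T, S_m ≤ S₀ t ∧ S₀ t ≤ S_M)
    -- `S₁ ∈ C¹([0,L])` with `S_m ≤ S₁ ≤ S_M`
    (hS₁d : ∀ x ∈ Icc (0:ℝ) L, HasDerivWithinAt S₁ (dS₁ x) (Icc 0 L) x)
    (hdS₁cont : ContinuousOn dS₁ (Icc 0 L))
    (hS₁b : ∀ x ∈ Icc (0:ℝ) L, S_m ≤ S₁ x ∧ S₁ x ≤ S_M)
    -- `A` strictly positive, `A` and `∂ₓA` continuously differentiable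
    (hApos : ∀ t ∈ Icc (0:ℝ) T, ∀ x ∈ Icc (0:ℝ) L, 0 < A t x)
    (hAcont : ContinuousOn (fun p : ℝ × ℝ => A p.1 p.2) (Icc 0 T ×ˢ Icc 0 L))
    (hAt : ∀ t ∈ Icc (0:ℝ) T, ∀ x ∈ Icc (0:ℝ) L,
        HasDerivWithinAt (fun s => A s x) (At t x) (Icc 0 T) t)
    (hAx : ∀ t ∈ Icc (0:ℝ) T, ∀ x ∈ Icc (0:ℝ) L,
        HasDerivWithinAt (fun y => A t y) (Ax t x) (Icc 0 L) x)
    (hAtcont : ContinuousOn (fun p : ℝ × ℝ => At p.1 p.2) (Icc 0 T ×ˢ Icc 0 L))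
    (hAxcont : ContinuousOn (fun p : ℝ × ℝ => Ax p.1 p.2) (Icc 0 T ×ˢ Icc 0 L))
    (hAxt : ∀ t ∈ Icc (0:ℝ) T, ∀ x ∈ Icc (0:ℝ) L,
        HasDerivWithinAt (fun s => Ax s x) (Axt t x) (Icc 0 T) t)
    (hAxx : ∀ t ∈ Icc (0:ℝ) T, ∀ x ∈ Icc (0:ℝ) L,
        HasDerivWithinAt (fun y => Ax t y) (Axx t x) (Icc 0 L) x)
    (hAxtcont : ContinuousOn (fun p : ℝ × ℝ => Axt p.1 p.2) (Icc 0 T ×ˢ Icc 0 L))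
    (hAxxcont : ContinuousOn (fun p : ℝ × ℝ => Axx p.1 p.2) (Icc 0 T ×ˢ Icc 0 L))
    -- `v ∈ C¹([0,T] × [0,L])`
    (hvcont : ContinuousOn (fun p : ℝ × ℝ => v p.1 p.2) (Icc 0 T ×ˢ Icc 0 L))
    (hvt : ∀ t ∈ Icc (0:ℝ) T, ∀ x ∈ Icc (0:ℝ) L,
        HasDerivWithinAt (fun s => v s x) (vt t x) (Icc 0 T) t)
    (hvx : ∀ t ∈ Icc (0:ℝ) T, ∀ x ∈ Icc (0:ℝ) L,
        HasDerivWithinAt (fun y => v t y) (vx t x) (Icc 0 L) x)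
    (hvtcont : ContinuousOn (fun p : ℝ × ℝ => vt p.1 p.2) (Icc 0 T ×ˢ Icc 0 L))
    (hvxcont : ContinuousOn (fun p : ℝ × ℝ => vx p.1 p.2) (Icc 0 T ×ˢ Icc 0 L))
    -- mass conservation `∂ₜA + ∂ₓ(vA) = 0` on `(0,T) × (0,L)`
    (hmass : ∀ t ∈ Ioo (0:ℝ) T, ∀ x ∈ Ioo (0:ℝ) L,
        At t x + (vx t x * A t x + v t x * Ax t x) = 0)
    -- `A ∂ₓv` is independent of `x` for each `t`
    (hmom : ∀ t ∈ Icc (0:ℝ) T, ∀ x ∈ Icc (0:ℝ) L, ∀ y ∈ Icc (0:ℝ) L,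
        A t x * vx t x = A t y * vx t y)
    -- boundary and initial conditions
    (hA0 : ∀ t ∈ Icc (0:ℝ) T, A t 0 = S₀ t)
    (hA1 : ∀ x ∈ Icc (0:ℝ) L, A 0 x = S₁ x)
    (hvin : ∀ t ∈ Icc (0:ℝ) T, v t 0 = v_in t)
    (hvL : ∀ t ∈ Icc (0:ℝ) T, v t L = v_L t) :
    ∀ t ∈ Icc (0:ℝ) T, ∀ x ∈ Icc (0:ℝ) L,
      S_m * Real.exp
        (-(max ((sSup ((fun z => |dS₁ z|) '' Icc (0:ℝ) L)) / S_m)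
            ((1 / (v_m * S_m)) *
              (sSup ((fun s => |dS₀ s|) '' Icc (0:ℝ) T) + V_M * S_M / L))) * L)
      ≤ A t x :=
  statement13_general T L v_m V_M S_m S_M hT hL hvm hSm hSmM v_in v_L S₀ dS₀ S₁ dS₁ v vx A At Ax Axt
    Axx hdata hS₀d hdS₀cont hS₀b hS₁d hdS₁cont hS₁b hApos hAcont hAt hAx hAtcont hAxcont hAxt hAxx
    hAxtcont hAxxcont hvcont hvx hvxcont hmass hmom hA0 hA1 hvin hvL
end
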